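/- arXiv:1807.10684 — 7 statements merged into one kernel-verified Lean document; each statement's English description precedes it below -/
import Mathlib

section
/- Let N = {1,…,n} be a set of agents, O a finite set of indivisible items, and for each agent i an additive utility function u_i : O → ℝ extended to bundles by u_i(X) = ∑_{o∈X} u_i(o). If a complete allocation π is EF1, i.e., for all agents i, j either u_i(π(i)) ≥ u_i(π(j)) or there is an item o ∈ π(i) ∪ π(j) with u_i(π(i)∖{o}) ≥ u_i(π(j)∖{o}), then π satisfies PROP1: for every agent i, either u_i(π(i)) ≥ u_i(O)/n, or u_i(π(i)) + u_i(o) ≥ u_i(O)/n for some o ∈ O∖π(i), or u_i(π(i)) − u_i(o) ≥ u_i(O)/n for some o ∈ π(i). -/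
/-!
Fix an agent `i` and let `j` be an agent whose bundle `i` values most. Since the bundles partition
`O`, `u_i(O)` is the sum of the `n` values `u_i(π k)`, so `u_i(O)/n ≤ u_i(π j)`. EF1 of `i` towards
`j` lets `i` catch up with `u_i(π j)` after one item is removed from `π j` or from `π i`; as the
bundles are disjoint, that item lies in only one of them, and this is PROP1 with that item.
-/

open Finset

theorem Finset.exists_sum_div_card_le {α : Type*} {s : Finset α} (hs : s.Nonempty) (f : α → ℝ) :
    ∃ j ∈ s, (∑ k ∈ s, f k) / #s ≤ f j := by
  refine exists_le_of_sum_le hs ?_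
  rw [sum_const, nsmul_eq_mul, mul_div_cancel₀ _ (Nat.cast_ne_zero.2 hs.card_pos.ne')]

theorem Finset.sum_le_add_or_le_sub_of_sum_erase_le {α M : Type*} [DecidableEq α]
    [AddCommGroup M] [PartialOrder M] [IsOrderedAddMonoid M] {A B : Finset α} {v : α → M} {o : α}
    (hAB : Disjoint A B) (ho : o ∈ A ∪ B) (h : ∑ p ∈ B.erase o, v p ≤ ∑ p ∈ A.erase o, v p) :
    (o ∈ B \ A ∧ ∑ p ∈ B, v p ≤ ∑ p ∈ A, v p + v o) ∨
      (o ∈ A ∧ ∑ p ∈ B, v p ≤ ∑ p ∈ A, v p - v o) := by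
  rcases mem_union.1 ho with hoA | hoB
  · rw [erase_eq_of_notMem (disjoint_left.1 hAB hoA), sum_erase_eq_sub hoA] at h
    exact Or.inr ⟨hoA, h⟩
  · have hoA : o ∉ A := disjoint_right.1 hAB hoB
    rw [erase_eq_of_notMem hoA, sum_erase_eq_sub hoB] at h
    exact Or.inl ⟨mem_sdiff.2 ⟨hoB, hoA⟩, sub_le_iff_le_add.1 h⟩

theorem ef1_complete_implies_prop1_general
    (n : ℕ) (ι : Type*) [DecidableEq ι] (O : Finset ι)
    (u : Fin n → ι → ℝ)
    (π : Fin n → Finset ι)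
    (hdisj : ∀ i j : Fin n, i ≠ j → Disjoint (π i) (π j))
    (hcomplete : Finset.univ.biUnion π = O)
    (hEF1 : ∀ i j : Fin n,
      (∑ o ∈ π j, u i o ≤ ∑ o ∈ π i, u i o) ∨
      (∃ o ∈ π i ∪ π j,
        ∑ p ∈ (π j).erase o, u i p ≤ ∑ p ∈ (π i).erase o, u i p)) :
    ∀ i : Fin n,
      ((∑ o ∈ O, u i o) / n ≤ ∑ o ∈ π i, u i o) ∨
      (∃ o ∈ O \ π i, (∑ o ∈ O, u i o) / n ≤ (∑ p ∈ π i, u i p) + u i o) ∨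
      (∃ o ∈ π i, (∑ o ∈ O, u i o) / n ≤ (∑ p ∈ π i, u i p) - u i o) := by
  intro i
  have hsum : ∑ o ∈ O, u i o = ∑ k, ∑ o ∈ π k, u i o := by
    rw [← hcomplete, sum_biUnion fun a _ b _ hab => hdisj a b hab]
  obtain ⟨j, -, hj⟩ := exists_sum_div_card_le ⟨i, mem_univ i⟩ fun k => ∑ o ∈ π k, u i o
  rw [card_univ, Fintype.card_fin, ← hsum] at hj
  by_cases hij : i = j
  · subst hij
    exact Or.inl hj
  rcases hEF1 i j with h | ⟨o, ho, h⟩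
  · exact Or.inl (hj.trans h)
  rcases sum_le_add_or_le_sub_of_sum_erase_le (hdisj i j hij) ho h with ⟨hoj, hle⟩ | ⟨hoi, hle⟩
  · have hjO : π j ⊆ O := hcomplete ▸ subset_biUnion_of_mem π (mem_univ j)
    exact Or.inr (Or.inl ⟨o, sdiff_subset_sdiff hjO le_rfl hoj, hj.trans hle⟩)
  · exact Or.inr (Or.inr ⟨o, hoi, hj.trans hle⟩)

/-- For additive utilities, an EF1 complete allocation satisfies PROP1. -/
theorem ef1_complete_implies_prop1
    (n : ℕ) (ι : Type*) [DecidableEq ι] (O : Finset ι)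
    (u : Fin n → ι → ℝ)
    (π : Fin n → Finset ι)
    (hsub : ∀ i, π i ⊆ O)
    (hdisj : ∀ i j : Fin n, i ≠ j → Disjoint (π i) (π j))
    (hcomplete : Finset.univ.biUnion π = O)
    (hEF1 : ∀ i j : Fin n,
      (∑ o ∈ π j, u i o ≤ ∑ o ∈ π i, u i o) ∨
      (∃ o ∈ π i ∪ π j,
        ∑ p ∈ (π j).erase o, u i p ≤ ∑ p ∈ (π i).erase o, u i p)) :
    ∀ i : Fin n,
      ((∑ o ∈ O, u i o) / n ≤ ∑ o ∈ π i, u i o) ∨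
      (∃ o ∈ O \ π i, (∑ o ∈ O, u i o) / n ≤ (∑ p ∈ π i, u i p) + u i o) ∨
      (∃ o ∈ π i, (∑ o ∈ O, u i o) / n ≤ (∑ p ∈ π i, u i p) - u i o) :=
  ef1_complete_implies_prop1_general n ι O u π hdisj hcomplete hEF1
end

section
/- For every instance with a set N = {1,…,n} of agents, a finite set O of indivisible items, and additive utilities u_i : O → ℝ (where each item may be a good, i.e. have positive utility, for some agents and a chore, i.e. have negative utility, for others), there exists a complete allocation π that is EF1: for all agents i, j, either u_i(π(i)) ≥ u_i(π(j)) or there is an item o ∈ π(i) ∪ π(j) with u_i(π(i)∖{o}) ≥ u_i(π(j)∖{o}). -/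
/-!
Double round robin. The items that every agent values at most zero (the chores) are picked
round-robin in the order `0, 1, …, n - 1`, each agent taking its favourite remaining chore; the
first few turns are skipped (they stand for dummy chores of value zero), so that the chores run out
exactly at the end of a round. The other items are then picked round-robin in the reverse order,
each agent taking its favourite remaining item among those it values positively, or passing.

In both phases every pick of an agent `i` is worth, to `i`, at least as much as any later pick.
So in the phase where `i` picks before `j` in each round, `i` does not envy `j`; in the other phase
each pick of `i` dominates the next pick of `j`, so `i`'s envy is at most the value of `j`'s first
pick minus that of `i`'s last pick. For goods the last pick of `i` is nonnegative and the first good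
of `j` can be removed; for chores the first chore of `j` is nonpositive and the last chore of `i`
can be removed.
-/

open Finset Function

section EnvyFreeness

variable {ι : Type*} [DecidableEq ι]

def EnvyFreeUpToOne (v : ι → ℝ) (A B : Finset ι) : Prop :=
  ∑ o ∈ B, v o ≤ ∑ o ∈ A, v o ∨ ∃ o ∈ A ∪ B, ∑ p ∈ B.erase o, v p ≤ ∑ p ∈ A.erase o, v p

theorem envyFreeUpToOne_of_le_add {v : ι → ℝ} {A B : Finset ι} {g : Option ι}
    (hAB : Disjoint A B) (hg : g.toFinset ⊆ B)
    (h : ∑ o ∈ B, v o ≤ ∑ o ∈ A, v o + ∑ o ∈ g.toFinset, v o) : EnvyFreeUpToOne v A B := by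
  cases g with
  | none => exact Or.inl (by simpa using h)
  | some g =>
    have hgB : g ∈ B := by simpa using hg
    refine Or.inr ⟨g, mem_union_right _ hgB, ?_⟩
    rw [sum_erase_eq_sub hgB, erase_eq_of_notMem (disjoint_right.1 hAB hgB)]
    simp only [Option.toFinset_some, sum_singleton] at h
    linarith

theorem envyFreeUpToOne_of_add_le {v : ι → ℝ} {A B : Finset ι} {c : Option ι}
    (hAB : Disjoint A B) (hc : c.toFinset ⊆ A)
    (h : ∑ o ∈ B, v o + ∑ o ∈ c.toFinset, v o ≤ ∑ o ∈ A, v o) : EnvyFreeUpToOne v A B := by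
  cases c with
  | none => exact Or.inl (by simpa using h)
  | some c =>
    have hcA : c ∈ A := by simpa using hc
    refine Or.inr ⟨c, mem_union_left _ hcA, ?_⟩
    rw [sum_erase_eq_sub hcA, erase_eq_of_notMem (disjoint_left.1 hAB hcA)]
    simp only [Option.toFinset_some, sum_singleton] at h
    linarith

end EnvyFreeness

namespace Picking

variable {ι : Type*}

noncomputable def bestOf (v : ι → ℝ) (T : Finset ι) : Option ι := T.toList.argmax v

theorem bestOf_subset (v : ι → ℝ) (T : Finset ι) : (bestOf v T).toFinset ⊆ T := fun _ ho =>
  mem_toList.1 (List.argmax_mem (Option.mem_toFinset.1 ho))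

theorem le_sum_bestOf {v : ι → ℝ} {T : Finset ι} {o : ι} (ho : o ∈ T) :
    v o ≤ ∑ p ∈ (bestOf v T).toFinset, v p := by
  cases h : bestOf v T with
  | none =>
    rw [bestOf, List.argmax_eq_none, toList_eq_nil] at h
    simp [h] at ho
  | some m => simpa using List.le_of_mem_argmax (mem_toList.2 ho) h

theorem card_bestOf {v : ι → ℝ} {T : Finset ι} (hT : T.Nonempty) : #(bestOf v T).toFinset = 1 := by
  cases h : bestOf v T with
  | none =>
    rw [bestOf, List.argmax_eq_none, toList_eq_nil] at h
    simp [h] at hT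
  | some m => simp

variable [DecidableEq ι] (pick : ℕ → Finset ι → Option ι) (S : Finset ι)

-- At turn `t` the rule takes an item from those still available, or passes (`none`); since
-- `none.toFinset = ∅`, a pass is worth `0` in the sums below.
def remaining : ℕ → Finset ι
  | 0 => S
  | t + 1 => remaining t \ (pick t (remaining t)).toFinset

def picked (t : ℕ) : Option ι := pick t (remaining pick S t)

variable {pick S}

theorem remaining_zero : remaining pick S 0 = S := rfl

theorem remaining_antitone : Antitone (remaining pick S) :=
  antitone_nat_of_succ_le fun _ => sdiff_subset

theorem remaining_subset (t : ℕ) : remaining pick S t ⊆ S :=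
  remaining_antitone (Nat.zero_le t)

theorem picked_subset_remaining (hpick : ∀ t T, (pick t T).toFinset ⊆ T) (t : ℕ) :
    (picked pick S t).toFinset ⊆ remaining pick S t :=
  hpick _ _

theorem disjoint_picked (hpick : ∀ t T, (pick t T).toFinset ⊆ T) {s t : ℕ} (hst : s ≠ t) :
    Disjoint (picked pick S s).toFinset (picked pick S t).toFinset := by
  wlog h : s < t generalizing s t
  · exact (this hst.symm (by omega)).symm
  refine disjoint_left.2 fun o hs ht => ?_
  have ho : o ∈ remaining pick S (s + 1) :=
    remaining_antitone h (picked_subset_remaining hpick t ht)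
  exact (mem_sdiff.1 ho).2 hs

theorem exists_mem_picked {o : ι} {s t : ℕ} (hs : o ∈ remaining pick S s)
    (ht : o ∉ remaining pick S t) : ∃ r, s ≤ r ∧ r < t ∧ o ∈ (picked pick S r).toFinset := by
  induction t with
  | zero => exact absurd (remaining_antitone (Nat.zero_le s) hs) ht
  | succ t ih =>
    by_cases hot : o ∈ remaining pick S t
    · have hst : s ≤ t := by
        by_contra h
        exact ht (remaining_antitone (by omega) hs)
      refine ⟨t, hst, t.lt_succ_self, ?_⟩
      by_contra h
      exact ht (mem_sdiff.2 ⟨hot, h⟩)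
    · obtain ⟨r, hsr, hrt, hr⟩ := ih hot
      exact ⟨r, hsr, by omega, hr⟩

theorem remaining_ssubset (hpick : ∀ t T, (pick t T).toFinset ⊆ T) {o : ι} {s t t' : ℕ}
    (hst : s ≤ t) (htt' : t < t') (ho : o ∈ (picked pick S t).toFinset) :
    remaining pick S t' ⊂ remaining pick S s := by
  refine (ssubset_iff_of_subset (remaining_antitone (by omega))).2
    ⟨o, remaining_antitone hst (picked_subset_remaining hpick t ho), fun h => ?_⟩
  exact (mem_sdiff.1 (remaining_antitone htt' h)).2 ho

theorem card_remaining_succ (hpick : ∀ t T, (pick t T).toFinset ⊆ T) (t : ℕ) :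
    #(remaining pick S (t + 1)) + #(picked pick S t).toFinset = #(remaining pick S t) :=
  card_sdiff_add_card_eq_card (picked_subset_remaining hpick t)

theorem sum_picked_le (hpick : ∀ t T, (pick t T).toFinset ⊆ T) {v : ι → ℝ} {x : ℝ} {s t : ℕ}
    (hst : s ≤ t) (hx : ∀ o ∈ remaining pick S s, v o ≤ x)
    (hnone : picked pick S t = none → 0 ≤ x) :
    ∑ o ∈ (picked pick S t).toFinset, v o ≤ x := by
  cases h : picked pick S t with
  | none => simpa using hnone h
  | some o =>
    have ho : o ∈ remaining pick S t := picked_subset_remaining hpick t (by simp [h])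
    simpa using hx o (remaining_antitone hst ho)

end Picking

namespace RoundRobin

open Picking

variable {ι : Type*} {n : ℕ} (σ : Equiv.Perm (Fin n))

def turn (a : Fin n) (r : ℕ) : ℕ := r * n + σ.symm a

theorem turn_lt_turn_succ (a b : Fin n) (r : ℕ) : turn σ a r < turn σ b (r + 1) := by
  have := (σ.symm a).isLt
  simp only [turn, add_mul, one_mul]
  omega

theorem turn_lt {r R : ℕ} (a : Fin n) (h : r < R) : turn σ a r < R * n := by
  have := (σ.symm a).isLt
  have : (r + 1) * n ≤ R * n := Nat.mul_le_mul_right n h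
  simp only [turn, add_mul, one_mul] at *
  omega

theorem sum_turn_le_of_lt (f : ℕ → ℝ) {i j : Fin n} (hij : σ.symm i < σ.symm j) (R : ℕ)
    (hf : ∀ r t, turn σ i r < t → t < R * n → f t ≤ f (turn σ i r)) :
    ∑ r ∈ range R, f (turn σ j r) ≤ ∑ r ∈ range R, f (turn σ i r) :=
  sum_le_sum fun r hr => hf r _ (by simp only [turn]; omega) (turn_lt σ j (mem_range.1 hr))

theorem sum_turn_add_le (f : ℕ → ℝ) (i j : Fin n) (R : ℕ)
    (hf : ∀ r t, turn σ i r < t → t < (R + 1) * n → f t ≤ f (turn σ i r)) :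
    ∑ r ∈ range (R + 1), f (turn σ j r) + f (turn σ i R) ≤
      ∑ r ∈ range (R + 1), f (turn σ i r) + f (turn σ j 0) := by
  rw [sum_range_succ', sum_range_succ]
  have : ∑ r ∈ range R, f (turn σ j (r + 1)) ≤ ∑ r ∈ range R, f (turn σ i r) :=
    sum_le_sum fun r hr =>
      hf r _ (turn_lt_turn_succ σ i j r) (turn_lt σ j (by simpa using mem_range.1 hr))
  linarith

def bundle [DecidableEq ι] (pick : ℕ → Finset ι → Option ι) (S : Finset ι) (R : ℕ) (a : Fin n) :
    Finset ι :=
  (range R).biUnion fun r => (picked pick S (turn σ a r)).toFinset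

theorem picked_subset_bundle [DecidableEq ι] {pick : ℕ → Finset ι → Option ι} {S : Finset ι}
    {R r : ℕ} (a : Fin n) (hr : r < R) :
    (picked pick S (turn σ a r)).toFinset ⊆ bundle σ pick S R a :=
  subset_biUnion_of_mem (fun r => (picked pick S (turn σ a r)).toFinset) (mem_range.2 hr)

variable [NeZero n]

def agentAt (t : ℕ) : Fin n := σ (Fin.ofNat n t)

@[simp]
theorem agentAt_turn (a : Fin n) (r : ℕ) : agentAt σ (turn σ a r) = a := by
  have : Fin.ofNat n (r * n + σ.symm a) = σ.symm a := by
    ext; simp [Nat.add_mod, Nat.mod_eq_of_lt (σ.symm a).isLt]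
  rw [agentAt, turn, this, Equiv.apply_symm_apply]

theorem turn_agentAt (t : ℕ) : turn σ (agentAt σ t) (t / n) = t := by
  simp [agentAt, turn, Nat.div_add_mod']

theorem turn_injective (a : Fin n) : Injective (turn σ a) := fun r r' h => by
  simpa [turn, NeZero.ne n] using h

variable (u : Fin n → ι → ℝ)

noncomputable def chorePick (d t : ℕ) (T : Finset ι) : Option ι :=
  if d ≤ t then bestOf (u (agentAt σ t)) T else none

theorem chorePick_subset (d t : ℕ) (T : Finset ι) : (chorePick σ u d t T).toFinset ⊆ T := by
  unfold chorePick
  split_ifs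
  exacts [bestOf_subset _ _, by simp]

theorem le_sum_chorePick {d t : ℕ} {T : Finset ι} (hT : ∀ o ∈ T, u (agentAt σ t) o ≤ 0) {o : ι}
    (ho : o ∈ T) :
    u (agentAt σ t) o ≤ ∑ p ∈ (chorePick σ u d t T).toFinset, u (agentAt σ t) p := by
  unfold chorePick
  split_ifs
  · exact le_sum_bestOf ho
  · simpa using hT o ho

noncomputable def goodPick (t : ℕ) (T : Finset ι) : Option ι :=
  bestOf (u (agentAt σ t)) (T.filter fun o => 0 < u (agentAt σ t) o)

theorem goodPick_subset (t : ℕ) (T : Finset ι) : (goodPick σ u t T).toFinset ⊆ T :=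
  (bestOf_subset _ _).trans (filter_subset _ _)

theorem sum_goodPick_nonneg (t : ℕ) (T : Finset ι) :
    0 ≤ ∑ p ∈ (goodPick σ u t T).toFinset, u (agentAt σ t) p :=
  sum_nonneg fun _ hp => (mem_filter.1 (bestOf_subset _ _ hp)).2.le

theorem le_sum_goodPick {t : ℕ} {T : Finset ι} {o : ι} (ho : o ∈ T) :
    u (agentAt σ t) o ≤ ∑ p ∈ (goodPick σ u t T).toFinset, u (agentAt σ t) p := by
  by_cases hpos : 0 < u (agentAt σ t) o
  · exact le_sum_bestOf (mem_filter.2 ⟨ho, hpos⟩)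
  · exact (not_lt.1 hpos).trans (sum_goodPick_nonneg σ u t T)

variable [DecidableEq ι]

section Bundles

variable {pick : ℕ → Finset ι → Option ι} {S : Finset ι}

theorem sum_bundle (hpick : ∀ t T, (pick t T).toFinset ⊆ T) (v : ι → ℝ) (R : ℕ) (a : Fin n) :
    ∑ o ∈ bundle σ pick S R a, v o =
      ∑ r ∈ range R, ∑ o ∈ (picked pick S (turn σ a r)).toFinset, v o :=
  sum_biUnion fun _ _ _ _ h => disjoint_picked hpick ((turn_injective σ a).ne h)

theorem disjoint_bundle (hpick : ∀ t T, (pick t T).toFinset ⊆ T) (R : ℕ) :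
    Pairwise (Disjoint on (bundle σ pick S R)) := fun a b hab => by
  simp only [onFun, bundle, disjoint_biUnion_left, disjoint_biUnion_right]
  intro r _ r' _
  exact disjoint_picked hpick fun h => hab (by simpa using congrArg (agentAt σ) h)

theorem biUnion_bundle (hpick : ∀ t T, (pick t T).toFinset ⊆ T) {R : ℕ}
    (hR : remaining pick S (R * n) = ∅) : univ.biUnion (bundle σ pick S R) = S := by
  ext o
  simp only [mem_biUnion, mem_univ, true_and, bundle, mem_range]
  constructor
  · rintro ⟨a, r, -, ho⟩
    exact remaining_subset _ (picked_subset_remaining hpick _ ho)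
  · intro ho
    obtain ⟨t, -, ht, hot⟩ := exists_mem_picked (s := 0) ho (hR ▸ notMem_empty o)
    exact ⟨agentAt σ t, t / n, Nat.div_lt_of_lt_mul (by rwa [mul_comm]),
      by rwa [turn_agentAt]⟩

end Bundles

theorem card_remaining_chorePick {C : Finset ι} {d N : ℕ} (hN : #C + d = N) {t : ℕ}
    (ht : t ≤ N) : #(remaining (chorePick σ u d) C t) = min #C (N - t) := by
  induction t with
  | zero => simp [remaining_zero]; omega
  | succ t ih =>
    have h := card_remaining_succ (chorePick_subset σ u d) (S := C) t
    rw [ih (by omega)] at h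
    simp only [picked, chorePick] at h
    split_ifs at h with hdt
    · have hne : (remaining (chorePick σ u d) C t).Nonempty := by
        rw [← card_pos, ih (by omega)]
        omega
      rw [card_bestOf hne] at h
      omega
    · simp only [Option.toFinset_none, card_empty] at h
      omega

theorem sum_picked_chorePick_le {C : Finset ι} (hC : ∀ o ∈ C, ∀ k, u k o ≤ 0) {d N : ℕ}
    (hN : #C + d = N) {i : Fin n} {s t : ℕ} (hs : agentAt σ s = i) (hst : s < t) (ht : t < N) :
    ∑ o ∈ (picked (chorePick σ u d) C t).toFinset, u i o ≤
      ∑ o ∈ (picked (chorePick σ u d) C s).toFinset, u i o := by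
  subst hs
  refine sum_picked_le (chorePick_subset σ u d) hst.le
    (fun o ho => le_sum_chorePick σ u (fun p hp => hC p (remaining_subset s hp) _) ho)
    fun hnone => ?_
  have hdt : ¬ d ≤ t := fun hdt => by
    have hne : (remaining (chorePick σ u d) C t).Nonempty := by
      rw [← card_pos, card_remaining_chorePick σ u hN ht.le]
      omega
    have := card_bestOf (v := u (agentAt σ t)) hne
    simp only [picked, chorePick, if_pos hdt] at hnone
    simp [hnone] at this
  simp [picked, chorePick, show ¬ d ≤ s by omega]

theorem exists_chore_allocation (C : Finset ι) (hC : ∀ o ∈ C, ∀ k, u k o ≤ 0) :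
    ∃ A : Fin n → Finset ι, univ.biUnion A = C ∧ Pairwise (Disjoint on A) ∧
      (∀ i j, σ.symm i < σ.symm j → ∑ o ∈ A j, u i o ≤ ∑ o ∈ A i, u i o) ∧
      ∀ i j, ∃ c : Option ι, c.toFinset ⊆ A i ∧
        ∑ o ∈ A j, u i o + ∑ o ∈ c.toFinset, u i o ≤ ∑ o ∈ A i, u i o := by
  -- `#C + 1` rounds whose first `N - #C` turns are skipped: the chores run out at the last turn.
  set N := (#C + 1) * n
  have hN : #C + (N - #C) = N := by
    have : #C + 1 ≤ N := Nat.le_mul_of_pos_right _ (NeZero.pos n)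
    omega
  set pick := chorePick σ u (N - #C)
  have hpick := chorePick_subset σ u (N - #C)
  have hdom : ∀ i r t, turn σ i r < t → t < N →
      ∑ o ∈ (picked pick C t).toFinset, u i o ≤ ∑ o ∈ (picked pick C (turn σ i r)).toFinset, u i o :=
    fun i r t hrt ht => sum_picked_chorePick_le σ u hC hN (agentAt_turn σ i r) hrt ht
  refine ⟨bundle σ pick C (#C + 1), biUnion_bundle σ hpick ?_, disjoint_bundle σ hpick _,
    fun i j hij => ?_, fun i j => ⟨_, picked_subset_bundle σ i (#C).lt_succ_self, ?_⟩⟩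
  · rw [← card_eq_zero, card_remaining_chorePick σ u hN le_rfl]
    simp
  · rw [sum_bundle σ hpick, sum_bundle σ hpick]
    exact sum_turn_le_of_lt σ _ hij _ (hdom i)
  · rw [sum_bundle σ hpick, sum_bundle σ hpick]
    have hfirst : ∑ o ∈ (picked pick C (turn σ j 0)).toFinset, u i o ≤ 0 :=
      sum_nonpos fun o ho =>
        hC o (remaining_subset _ (picked_subset_remaining hpick _ ho)) i
    linarith [sum_turn_add_le σ _ i j #C (hdom i)]

theorem remaining_goodPick_ssubset {G : Finset ι} (hG : ∀ o ∈ G, ∃ k, 0 < u k o) {r : ℕ}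
    (h : (remaining (goodPick σ u) G (r * n)).Nonempty) :
    remaining (goodPick σ u) G ((r + 1) * n) ⊂ remaining (goodPick σ u) G (r * n) := by
  obtain ⟨g, hg⟩ := h
  obtain ⟨a, ha⟩ := hG g (remaining_subset _ hg)
  have hround := turn_lt σ a r.lt_succ_self
  obtain ⟨s, hrs, hs, o, ho⟩ : ∃ s, r * n ≤ s ∧ s < (r + 1) * n ∧
      ∃ o, o ∈ (picked (goodPick σ u) G s).toFinset := by
    by_cases hga : g ∈ remaining (goodPick σ u) G (turn σ a r)
    · have hne : #(picked (goodPick σ u) G (turn σ a r)).toFinset = 1 := by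
        rw [picked, goodPick, agentAt_turn]
        exact card_bestOf ⟨g, mem_filter.2 ⟨hga, ha⟩⟩
      exact ⟨turn σ a r, by simp [turn], hround, card_pos.1 (by omega)⟩
    · obtain ⟨s, hrs, hs, hgs⟩ := exists_mem_picked hg hga
      exact ⟨s, hrs, hs.trans hround, g, hgs⟩
  exact remaining_ssubset (goodPick_subset σ u) hrs hs ho

theorem remaining_goodPick_eq_empty {G : Finset ι} (hG : ∀ o ∈ G, ∃ k, 0 < u k o) :
    remaining (goodPick σ u) G ((#G + 1) * n) = ∅ := by
  suffices ∀ r, #(remaining (goodPick σ u) G (r * n)) ≤ #G - r by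
    simpa using this (#G + 1)
  intro r
  induction r with
  | zero => simp [remaining_zero]
  | succ r ih =>
    rcases (remaining (goodPick σ u) G (r * n)).eq_empty_or_nonempty with h | h
    · have hsub : remaining (goodPick σ u) G ((r + 1) * n) ⊆ remaining (goodPick σ u) G (r * n) :=
        remaining_antitone (Nat.mul_le_mul_right n r.le_succ)
      rw [h, subset_empty] at hsub
      simp [hsub]
    · have := card_lt_card (remaining_goodPick_ssubset σ u hG h)
      omega

theorem sum_picked_goodPick_le (G : Finset ι) {i : Fin n} {s t : ℕ} (hs : agentAt σ s = i)
    (hst : s ≤ t) :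
    ∑ o ∈ (picked (goodPick σ u) G t).toFinset, u i o ≤
      ∑ o ∈ (picked (goodPick σ u) G s).toFinset, u i o := by
  subst hs
  exact sum_picked_le (goodPick_subset σ u) hst (fun _ ho => le_sum_goodPick σ u ho)
    fun _ => sum_goodPick_nonneg σ u _ _

theorem exists_good_allocation (G : Finset ι) (hG : ∀ o ∈ G, ∃ k, 0 < u k o) :
    ∃ B : Fin n → Finset ι, univ.biUnion B = G ∧ Pairwise (Disjoint on B) ∧
      (∀ i j, σ.symm i < σ.symm j → ∑ o ∈ B j, u i o ≤ ∑ o ∈ B i, u i o) ∧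
      ∀ i j, ∃ g : Option ι, g.toFinset ⊆ B j ∧
        ∑ o ∈ B j, u i o ≤ ∑ o ∈ B i, u i o + ∑ o ∈ g.toFinset, u i o := by
  set pick := goodPick σ u
  have hpick := goodPick_subset σ u
  have hdom : ∀ i r t, turn σ i r < t → t < (#G + 1) * n →
      ∑ o ∈ (picked pick G t).toFinset, u i o ≤
        ∑ o ∈ (picked pick G (turn σ i r)).toFinset, u i o :=
    fun i r t hrt _ => sum_picked_goodPick_le σ u G (agentAt_turn σ i r) hrt.le
  refine ⟨bundle σ pick G (#G + 1), biUnion_bundle σ hpick (remaining_goodPick_eq_empty σ u hG),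
    disjoint_bundle σ hpick _, fun i j hij => ?_,
    fun i j => ⟨_, picked_subset_bundle σ j (#G).succ_pos, ?_⟩⟩
  · rw [sum_bundle σ hpick, sum_bundle σ hpick]
    exact sum_turn_le_of_lt σ _ hij _ (hdom i)
  · rw [sum_bundle σ hpick, sum_bundle σ hpick]
    have hlast : 0 ≤ ∑ o ∈ (picked pick G (turn σ i #G)).toFinset, u i o := by
      have := sum_goodPick_nonneg σ u (turn σ i #G) (remaining pick G (turn σ i #G))
      rwa [agentAt_turn] at this
    linarith [sum_turn_add_le σ _ i j #G (hdom i)]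

end RoundRobin

/-- For every instance with additive utilities (items may be goods for
some agents and chores for others), an EF1 complete allocation exists. -/
theorem exists_ef1_complete_allocation
    (n : ℕ) (hn : 0 < n) (ι : Type*) [DecidableEq ι] (O : Finset ι)
    (u : Fin n → ι → ℝ) :
    ∃ π : Fin n → Finset ι,
      (∀ i, π i ⊆ O) ∧
      (∀ i j : Fin n, i ≠ j → Disjoint (π i) (π j)) ∧
      (Finset.univ.biUnion π = O) ∧
      (∀ i j : Fin n,
        (∑ o ∈ π j, u i o ≤ ∑ o ∈ π i, u i o) ∨
        (∃ o ∈ π i ∪ π j,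
          ∑ p ∈ (π j).erase o, u i p ≤ ∑ p ∈ (π i).erase o, u i p)) := by
  have : NeZero n := ⟨hn.ne'⟩
  obtain ⟨A, hA, hAdisj, hA_lt, hA_one⟩ := RoundRobin.exists_chore_allocation (Equiv.refl _) u
    (O.filter fun o => ∀ k, u k o ≤ 0) fun o ho => (mem_filter.1 ho).2
  obtain ⟨B, hB, hBdisj, hB_gt, hB_one⟩ := RoundRobin.exists_good_allocation Fin.revPerm u
    (O.filter fun o => ¬ ∀ k, u k o ≤ 0) fun o ho => by simpa using (mem_filter.1 ho).2
  have hAB : ∀ a b, Disjoint (A a) (B b) := fun a b =>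
    (disjoint_filter_filter_not O O _).mono (hA ▸ subset_biUnion_of_mem A (mem_univ a))
      (hB ▸ subset_biUnion_of_mem B (mem_univ b))
  have hcover : univ.biUnion (fun a => A a ∪ B a) = O := by
    rw [biUnion_union, hA, hB, filter_union_filter_not_eq]
  have hdisj : ∀ i j, i ≠ j → Disjoint (A i ∪ B i) (A j ∪ B j) := fun i j h =>
    disjoint_union_left.2 ⟨disjoint_union_right.2 ⟨hAdisj h, hAB i j⟩,
      disjoint_union_right.2 ⟨(hAB j i).symm, hBdisj h⟩⟩
  have hsum : ∀ i a, ∑ o ∈ A a ∪ B a, u i o = ∑ o ∈ A a, u i o + ∑ o ∈ B a, u i o :=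
    fun _ a => sum_union (hAB a a)
  refine ⟨fun a => A a ∪ B a, fun a => hcover ▸ subset_biUnion_of_mem (fun a => A a ∪ B a)
    (mem_univ a), hdisj, hcover, fun i j => ?_⟩
  rcases lt_trichotomy i j with hij | rfl | hji
  · obtain ⟨g, hg, hle⟩ := hB_one i j
    refine envyFreeUpToOne_of_le_add (hdisj i j hij.ne) (hg.trans subset_union_right) ?_
    rw [hsum, hsum]
    linarith [hA_lt i j hij]
  · exact Or.inl le_rfl
  · obtain ⟨c, hc, hle⟩ := hA_one i j
    refine envyFreeUpToOne_of_add_le (hdisj i j hji.ne') (hc.trans subset_union_left) ?_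
    rw [hsum, hsum]
    linarith [hB_gt i j (by simpa using hji)]
end

section
/- Let N = {1,…,n} be a set of agents, O a finite set of indivisible items, and for each agent i a doubly monotonic utility function u_i : 2^O → ℝ: there is a partition of O into disjoint sets G_i and C_i such that for every item o ∈ O and every bundle X ⊆ O∖{o}, u_i(X ∪ {o}) ≥ u_i(X) if o ∈ G_i and u_i(X ∪ {o}) ≤ u_i(X) if o ∈ C_i. Then there exists a complete allocation π that is EF1: for all agents i, j, either u_i(π(i)) ≥ u_i(π(j)) or there is an item o ∈ π(i) ∪ π(j) with u_i(π(i)∖{o}) ≥ u_i(π(j)∖{o}). -/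
/-!
Two potential arguments. First only goods are allocated, each to an agent who desires it, keeping
every agent envy-free up to one good towards the best sub-bundle of every other bundle (say `k`
star-envies `i` if some part of `i`'s bundle is worth more to `k` than `k`'s own bundle). Among
such allocations, one maximising welfare and then the number of allocated items hands out every
item that somebody desires: a missing item can go to an agent whom no other agent desiring it
star-envies; otherwise there is a star-envy cycle, and rotating bundles along it, each agent
keeping only the best chore-free part of what it receives, raises welfare.

The remaining items are chores for everybody. Among EF1 allocations extending the first one,
maximise the number of allocated items and then welfare: a missing chore can go to an agent who
envies nobody; otherwise rotating bundles along a cycle of top choices raises welfare.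
-/

open Finset

section Utility

variable {ι : Type*} {v : Finset ι → ℝ} {O S A B X Y : Finset ι} {o : ι}

noncomputable def bestValue (v : Finset ι → ℝ) (Y : Finset ι) : ℝ :=
  Y.powerset.sup' ⟨∅, empty_mem_powerset Y⟩ v

theorem le_bestValue (h : X ⊆ Y) : v X ≤ bestValue v Y :=
  le_sup' v (mem_powerset.2 h)

theorem bestValue_le {c : ℝ} (h : ∀ X ⊆ Y, v X ≤ c) : bestValue v Y ≤ c :=
  sup'_le _ _ fun X hX => h X (mem_powerset.1 hX)

theorem bestValue_mono (h : X ⊆ Y) : bestValue v X ≤ bestValue v Y :=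
  bestValue_le fun _ hZ => le_bestValue (hZ.trans h)

variable [DecidableEq ι]

/-- Chores of `v` are treated as goods of `-v`. -/
def IsGoodSet (v : Finset ι → ℝ) (O S : Finset ι) : Prop :=
  ∀ o ∈ S, ∀ X ⊆ O.erase o, v X ≤ v (insert o X)

theorem IsGoodSet.le_of_subset (h : IsGoodSet v O S) (hAB : A ⊆ B) (hBO : B ⊆ O)
    (hBA : B \ A ⊆ S) : v A ≤ v B := by
  suffices key : ∀ D ⊆ S, Disjoint A D → A ∪ D ⊆ O → v A ≤ v (A ∪ D) by
    simpa [union_sdiff_of_subset hAB] using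
      key (B \ A) hBA disjoint_sdiff (by rwa [union_sdiff_of_subset hAB])
  intro D
  induction D using Finset.induction_on with
  | empty => simp
  | insert a D haD ih =>
    intro hDS hAD hADO
    rw [union_insert] at hADO ⊢
    have haA : a ∉ A := disjoint_left.1 hAD.symm (mem_insert_self a D)
    refine (ih ((subset_insert a D).trans hDS) (hAD.mono_right (subset_insert a D))
      ((subset_insert a _).trans hADO)).trans (h a (hDS (mem_insert_self a D)) _ ?_)
    exact subset_erase.2 ⟨(subset_insert a _).trans hADO, by simp [haA, haD]⟩

theorem IsGoodSet.insert_le_of_neg (h : IsGoodSet (-v) O S) (ho : o ∈ S) (hX : X ⊆ O.erase o) :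
    v (insert o X) ≤ v X :=
  neg_le_neg_iff.1 (h o ho X hX)

theorem IsGoodSet.le_of_subset_of_neg (h : IsGoodSet (-v) O S) (hAB : A ⊆ B) (hBO : B ⊆ O)
    (hBA : B \ A ⊆ S) : v B ≤ v A :=
  neg_le_neg_iff.1 (h.le_of_subset hAB hBO hBA)

theorem IsGoodSet.bestValue_eq (h : IsGoodSet v O S) (hYS : Y ⊆ S) (hYO : Y ⊆ O) :
    bestValue v Y = v Y :=
  (bestValue_le fun _ hX => h.le_of_subset hX hYO (sdiff_subset.trans hYS)).antisymm
    (le_bestValue subset_rfl)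

theorem IsGoodSet.bestValue_insert_of_neg (h : IsGoodSet (-v) O S) (hYO : Y ⊆ O) (ho : o ∈ S)
    (hoO : o ∈ O) : bestValue v (insert o Y) = bestValue v Y := by
  refine (bestValue_le fun X hX => ?_).antisymm (bestValue_mono (subset_insert o Y))
  have hXO : X ⊆ O := hX.trans (insert_subset hoO hYO)
  calc v X ≤ v (X.erase o) :=
        h.le_of_subset_of_neg (erase_subset o X) hXO fun x hx => by
          obtain rfl : x = o := by simp only [mem_sdiff, mem_erase] at hx; tauto
          exact ho
    _ ≤ bestValue v Y := le_bestValue ((erase_subset_erase o hX).trans (erase_insert_subset o Y))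

theorem IsGoodSet.exists_bestValue_eq_of_neg (h : IsGoodSet (-v) O S) (hYO : Y ⊆ O) :
    ∃ X ⊆ Y, Disjoint X S ∧ v X = bestValue v Y := by
  obtain ⟨X, hX, hXv⟩ := exists_mem_eq_sup' ⟨∅, empty_mem_powerset Y⟩ v
  rw [mem_powerset] at hX
  refine ⟨X \ S, sdiff_subset.trans hX, sdiff_disjoint, ?_⟩
  refine (le_bestValue (sdiff_subset.trans hX)).antisymm ?_
  rw [bestValue, hXv]
  exact h.le_of_subset_of_neg sdiff_subset (hX.trans hYO) (by simp [sdiff_sdiff_right_self])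

end Utility

section EnvyFreeness

variable {ι : Type*} [DecidableEq ι] {v : Finset ι → ℝ} {O C A A' B B' : Finset ι} {o : ι}

def EF1 (v : Finset ι → ℝ) (A B : Finset ι) : Prop :=
  v B ≤ v A ∨ ∃ o ∈ A ∪ B, v (B.erase o) ≤ v (A.erase o)

/-- Unlike `v B`, the best sub-bundle value is monotone in `B`, so this condition survives
shrinking the bundle `B`. -/
def EF1Best (v : Finset ι → ℝ) (A B : Finset ι) : Prop :=
  bestValue v B ≤ v A ∨ ∃ o ∈ B, bestValue v (B.erase o) ≤ v A

theorem EF1Best.mono_left (h : EF1Best v A B) (hA : v A ≤ v A') : EF1Best v A' B :=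
  h.imp (·.trans hA) fun ⟨o, ho, hle⟩ => ⟨o, ho, hle.trans hA⟩

theorem EF1Best.mono_right (h : EF1Best v A B) (hB : B' ⊆ B) : EF1Best v A B' := by
  rcases h with h | ⟨o, ho, h⟩
  · exact .inl ((bestValue_mono hB).trans h)
  · by_cases hoB' : o ∈ B'
    · exact .inr ⟨o, hoB', (bestValue_mono (erase_subset_erase o hB)).trans h⟩
    · exact .inl ((bestValue_mono (subset_erase.2 ⟨hB, hoB'⟩)).trans h)

theorem ef1Best_insert_of_bestValue_le (h : bestValue v B ≤ v A) (hoB : o ∉ B) :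
    EF1Best v A (insert o B) :=
  .inr ⟨o, mem_insert_self o B, by rwa [erase_insert hoB]⟩

theorem EF1Best.insert_of_neg (h : EF1Best v A B) (hC : IsGoodSet (-v) O C) (hBO : B ⊆ O)
    (ho : o ∈ C) (hoO : o ∈ O) (hoB : o ∉ B) : EF1Best v A (insert o B) := by
  rcases h with h | ⟨o', ho', h⟩
  · exact .inl (by rwa [hC.bestValue_insert_of_neg hBO ho hoO])
  · refine .inr ⟨o', mem_insert_of_mem ho', ?_⟩
    rwa [erase_insert_of_ne (ne_of_mem_of_not_mem ho' hoB).symm,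
      hC.bestValue_insert_of_neg ((erase_subset o' B).trans hBO) ho hoO]

theorem EF1Best.ef1 (h : EF1Best v A B) (hAB : Disjoint A B) : EF1 v A B := by
  rcases h with h | ⟨o, ho, h⟩
  · exact .inl ((le_bestValue subset_rfl).trans h)
  · refine .inr ⟨o, mem_union_right A ho, ?_⟩
    rw [erase_eq_of_notMem (disjoint_right.1 hAB ho)]
    exact (le_bestValue subset_rfl).trans h

theorem ef1_insert_left_of_le (h : v B ≤ v A) (hoA : o ∉ A) (hoB : o ∉ B) :
    EF1 v (insert o A) B :=
  .inr ⟨o, mem_union_left B (mem_insert_self o A),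
    by rwa [erase_insert hoA, erase_eq_of_notMem hoB]⟩

theorem EF1.insert_of_neg (h : EF1 v A B) (hC : IsGoodSet (-v) O C) (hBO : B ⊆ O) (ho : o ∈ C)
    (hoA : o ∉ A) (hoB : o ∉ B) : EF1 v A (insert o B) := by
  rcases h with h | ⟨o', ho', h⟩
  · exact .inl ((hC.insert_le_of_neg ho (subset_erase.2 ⟨hBO, hoB⟩)).trans h)
  · have hne : o ≠ o' := by rintro rfl; simp_all
    refine .inr ⟨o', by simp_all, ?_⟩
    rw [erase_insert_of_ne hne]
    exact (hC.insert_le_of_neg ho (subset_erase.2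
      ⟨(erase_subset o' B).trans hBO, fun h => hoB (mem_of_mem_erase h)⟩)).trans h

end EnvyFreeness

section Combinatorics

open Function

theorem Function.nonempty_periodicPts {α : Type*} [Finite α] [Nonempty α] (f : α → α) :
    (periodicPts f).Nonempty := by
  inhabit α
  obtain ⟨m, n, hmn, h⟩ := Finite.exists_ne_map_eq_of_infinite (f^[·] (default : α))
  wlog hlt : m < n generalizing m n
  · exact this n m hmn.symm h.symm (by omega)
  refine ⟨f^[m] default, mk_mem_periodicPts (n := n - m) (by omega) ?_⟩
  rw [IsPeriodicPt, IsFixedPt, ← iterate_add_apply, Nat.sub_add_cancel hlt.le]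
  exact h.symm

theorem exists_perm_ne_one_of_forall_exists_rel {α : Type*} [Finite α] {r : α → α → Prop}
    {s : Set α} (hs : s.Nonempty) (h : ∀ x ∈ s, ∃ y ∈ s, y ≠ x ∧ r x y) :
    ∃ σ : Equiv.Perm α, σ ≠ 1 ∧ ∀ x, σ x ≠ x → r x (σ x) := by
  classical
  obtain ⟨x₀, hx₀⟩ := hs
  have hsucc : ∀ x, ∃ y ∈ s, y ≠ x ∧ (x ∈ s → r x y) := fun x =>
    if hx : x ∈ s then (h x hx).imp fun _ ⟨hy, hne, hr⟩ => ⟨hy, hne, fun _ => hr⟩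
    else ⟨x₀, hx₀, fun he => hx (he ▸ hx₀), fun hx' => absurd hx' hx⟩
  choose f hfs hfne hfr using hsucc
  have : Nonempty α := ⟨x₀⟩
  let σ : Equiv.Perm α := Equiv.Perm.ofSubtype ((bijOn_periodicPts f).equiv f)
  have hσP : ∀ x ∈ periodicPts f, σ x = f x := fun x hx => Equiv.Perm.ofSubtype_apply_of_mem _ hx
  obtain ⟨p, hp⟩ := nonempty_periodicPts f
  refine ⟨σ, fun h1 => hfne p (by simpa [h1] using (hσP p hp).symm), fun x hx => ?_⟩
  have hxP : x ∈ periodicPts f :=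
    by_contra fun h' => hx (Equiv.Perm.ofSubtype_apply_of_not_mem _ h')
  obtain ⟨y, rfl⟩ := periodicPts_subset_range hxP
  rw [hσP _ hxP]
  exact hfr _ (hfs y)

theorem Set.Finite.exists_of_forall_exists_lt {α β : Type*} [LinearOrder β] {s : Set α}
    (hs : s.Finite) (hne : s.Nonempty) (φ : α → β) {q : α → Prop}
    (h : ∀ a ∈ s, ¬q a → ∃ b ∈ s, φ a < φ b) : ∃ a ∈ s, q a := by
  obtain ⟨a, ha, hmax⟩ := s.exists_max_image φ hs hne
  by_contra! hq
  obtain ⟨b, hb, hlt⟩ := h a ha (hq a ha)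
  exact (hmax b hb).not_gt hlt

end Combinatorics

section Allocation

open Function

variable {κ ι : Type*}

theorem finite_setOf_forall_subset [Finite κ] (O : Finset ι) :
    {π : κ → Finset ι | ∀ i, π i ⊆ O}.Finite :=
  (Set.Finite.pi fun _ => O.powerset.finite_toSet).subset fun _ hπ i _ =>
    mem_coe.2 (mem_powerset.2 (hπ i))

def welfare [Fintype κ] (u : κ → Finset ι → ℝ) (π : κ → Finset ι) : ℝ :=
  ∑ i, u i (π i)

variable [DecidableEq ι] {π : κ → Finset ι} {o : ι}

theorem biUnion_update_insert [Fintype κ] [DecidableEq κ] (π : κ → Finset ι) (i : κ) (o : ι) :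
    univ.biUnion (update π i (insert o (π i))) = insert o (univ.biUnion π) := by
  ext x
  simp only [mem_biUnion, mem_univ, true_and, mem_insert, update_apply]
  constructor
  · rintro ⟨j, hj⟩
    split_ifs at hj with hji
    · exact (mem_insert.1 hj).imp id fun h => ⟨i, h⟩
    · exact .inr ⟨j, hj⟩
  · rintro (rfl | ⟨j, hj⟩)
    · exact ⟨i, by simp⟩
    · by_cases hji : j = i
      · exact ⟨i, by simp [← hji, hj]⟩
      · exact ⟨j, by simp [hji, hj]⟩

theorem biUnion_comp_perm [Fintype κ] (π : κ → Finset ι) (σ : Equiv.Perm κ) :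
    univ.biUnion (π ∘ σ) = univ.biUnion π := by
  ext x
  simp only [mem_biUnion, mem_univ, true_and, comp_apply]
  exact ⟨fun ⟨j, hj⟩ => ⟨σ j, hj⟩, fun ⟨j, hj⟩ => ⟨σ.symm j, by simpa using hj⟩⟩

theorem pairwise_disjoint_update_insert [DecidableEq κ] (hπ : Pairwise (Disjoint on π))
    (ho : ∀ j, o ∉ π j) (i : κ) : Pairwise (Disjoint on update π i (insert o (π i))) := by
  intro a b hab
  simp only [onFun, update_apply]
  split_ifs with ha hb hb
  · exact absurd (ha.trans hb.symm) hab
  · exact disjoint_insert_left.2 ⟨ho b, hπ (ha ▸ hab)⟩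
  · exact disjoint_insert_right.2 ⟨ho a, hπ (hb ▸ hab)⟩
  · exact hπ hab

end Allocation

section GoodsPhase

open Function

variable {κ ι : Type*} [DecidableEq ι] {O : Finset ι}
  {u : κ → Finset ι → ℝ} {G C π : κ → Finset ι} {o : ι} {i : κ}

structure IsGoodsEF1Alloc (u : κ → Finset ι → ℝ) (G π : κ → Finset ι) : Prop where
  subset_goods : ∀ i, π i ⊆ G i
  disjoint : Pairwise (Disjoint on π)
  ef1Best : Pairwise fun k j => EF1Best (u k) (π k) (π j)

theorem isGoodsEF1Alloc_empty : IsGoodsEF1Alloc u G fun _ => ∅ where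
  subset_goods _ := empty_subset _
  disjoint _ _ _ := disjoint_empty_left _
  ef1Best _ _ _ := .inl (bestValue_le fun _ hX => by rw [subset_empty.1 hX])

theorem IsGoodsEF1Alloc.subset (hπ : IsGoodsEF1Alloc u G π) (hpart : ∀ i, G i ∪ C i = O)
    (j : κ) : π j ⊆ O :=
  (hπ.subset_goods j).trans (hpart j ▸ subset_union_left)

variable (hG : ∀ i, IsGoodSet (u i) O (G i)) (hC : ∀ i, IsGoodSet (-u i) O (C i))
  (hpart : ∀ i, G i ∪ C i = O)
include hG hC hpart

theorem IsGoodsEF1Alloc.update_insert [DecidableEq κ] (hπ : IsGoodsEF1Alloc u G π) (hoi : o ∈ G i)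
    (ho : ∀ j, o ∉ π j) (hi : ∀ k, o ∈ G k → k ≠ i → bestValue (u k) (π i) ≤ u k (π k)) :
    IsGoodsEF1Alloc u G (update π i (insert o (π i))) := by
  have hπO := hπ.subset hpart
  have hoO : o ∈ O := hpart i ▸ mem_union_left _ hoi
  refine ⟨fun j => ?_, pairwise_disjoint_update_insert hπ.disjoint ho i, fun k l hkl => ?_⟩
  · rcases eq_or_ne j i with rfl | hj
    · simpa using insert_subset hoi (hπ.subset_goods j)
    · simpa [hj] using hπ.subset_goods j
  rcases eq_or_ne l i with rfl | hl
  · rw [update_self, update_of_ne hkl]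
    by_cases hok : o ∈ G k
    · exact ef1Best_insert_of_bestValue_le (hi k hok hkl) (ho l)
    have hoC : o ∈ C k := (mem_union.1 (hpart k ▸ hoO)).resolve_left hok
    exact (hπ.ef1Best hkl).insert_of_neg (hC k) (hπO l) hoC hoO (ho l)
  rw [update_of_ne hl]
  rcases eq_or_ne k i with rfl | hk
  · rw [update_self]
    exact (hπ.ef1Best hkl).mono_left (hG k o hoi _ (subset_erase.2 ⟨hπO k, ho k⟩))
  · rw [update_of_ne hk]
    exact hπ.ef1Best hkl

theorem IsGoodsEF1Alloc.exists_rotate (hπ : IsGoodsEF1Alloc u G π) (σ : Equiv.Perm κ)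
    (hσ : ∀ j, u j (π j) ≤ bestValue (u j) (π (σ j))) :
    ∃ π', IsGoodsEF1Alloc u G π' ∧ ∀ j, u j (π' j) = bestValue (u j) (π (σ j)) := by
  have hπO := hπ.subset hpart
  choose X hXsub hXdisj hXv using fun j => (hC j).exists_bestValue_eq_of_neg (hπO (σ j))
  refine ⟨X, ⟨fun j x hx => ?_, fun a b hab => ?_, fun k l hkl => ?_⟩, hXv⟩
  · exact (mem_union.1 (hpart j ▸ hπO (σ j) (hXsub j hx))).resolve_right
      (disjoint_left.1 (hXdisj j) hx)
  · exact (hπ.disjoint (σ.injective.ne hab)).mono (hXsub a) (hXsub b)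
  have hk : u k (π k) ≤ u k (X k) := (hσ k).trans (hXv k).ge
  rcases eq_or_ne k (σ l) with rfl | hkl'
  · refine .inl (calc
      bestValue (u (σ l)) (X l) ≤ bestValue (u (σ l)) (π (σ l)) := bestValue_mono (hXsub l)
      _ = u (σ l) (π (σ l)) := (hG _).bestValue_eq (hπ.subset_goods _) (hπO _)
      _ ≤ u (σ l) (X (σ l)) := hk)
  · exact ((hπ.ef1Best hkl').mono_right (hXsub l)).mono_left hk

theorem IsGoodsEF1Alloc.exists_lt [Fintype κ] [DecidableEq κ] (hπ : IsGoodsEF1Alloc u G π)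
    (hoi : o ∈ G i) (ho : ∀ j, o ∉ π j) :
    ∃ π', IsGoodsEF1Alloc u G π' ∧
      toLex (welfare u π, #(univ.biUnion π)) < toLex (welfare u π', #(univ.biUnion π')) := by
  by_cases hA : ∃ i, o ∈ G i ∧ ∀ k, o ∈ G k → k ≠ i → bestValue (u k) (π i) ≤ u k (π k)
  · obtain ⟨i, hoi, hi⟩ := hA
    refine ⟨_, hπ.update_insert hG hC hpart hoi ho hi, Prod.Lex.toLex_lt_toLex'.2 ⟨?_, fun _ => ?_⟩⟩
    · refine sum_le_sum fun j _ => ?_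
      rcases eq_or_ne j i with rfl | hj
      · simpa using hG j o hoi _ (subset_erase.2 ⟨hπ.subset hpart j, ho j⟩)
      · simp [hj]
    · rw [biUnion_update_insert]
      exact card_lt_card (ssubset_insert (by simpa using ho))
  push Not at hA
  -- `σ` moves each agent of a star-envy cycle to one who envies it
  obtain ⟨σ, hσ1, hσ⟩ := exists_perm_ne_one_of_forall_exists_rel
    (r := fun i k => u k (π k) < bestValue (u k) (π i)) (s := {k | o ∈ G k}) ⟨i, hoi⟩
    fun i hi => (hA i hi).imp fun _ ⟨hk, hki, hlt⟩ => ⟨hk, hki, hlt⟩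
  have hlt j (hj : σ⁻¹ j ≠ j) : u j (π j) < bestValue (u j) (π (σ⁻¹ j)) := by
    simpa using hσ (σ⁻¹ j) (by simpa [eq_comm] using hj)
  have hle j : u j (π j) ≤ bestValue (u j) (π (σ⁻¹ j)) := by
    by_cases hj : σ⁻¹ j = j
    · rw [hj]; exact le_bestValue subset_rfl
    · exact (hlt j hj).le
  obtain ⟨π', hπ', hπ'v⟩ := hπ.exists_rotate hG hC hpart σ⁻¹ hle
  refine ⟨π', hπ', Prod.Lex.toLex_lt_toLex.2 (.inl ?_)⟩
  obtain ⟨j, hj⟩ : ∃ j, σ⁻¹ j ≠ j := by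
    by_contra! h
    exact hσ1 (inv_eq_one.1 (Equiv.ext h))
  exact sum_lt_sum (fun j _ => (hle j).trans (hπ'v j).ge)
    ⟨j, mem_univ j, (hlt j hj).trans_le (hπ'v j).ge⟩

theorem exists_isGoodsEF1Alloc_forall_mem_goods [Fintype κ] [DecidableEq κ] :
    ∃ π, IsGoodsEF1Alloc u G π ∧ ∀ o ∈ O, ∀ i, o ∈ G i → o ∈ univ.biUnion π := by
  have hs := (finite_setOf_forall_subset (κ := κ) O).subset
    fun π (hπ : IsGoodsEF1Alloc u G π) => hπ.subset hpart
  refine hs.exists_of_forall_exists_lt ⟨_, isGoodsEF1Alloc_empty⟩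
    (fun π => toLex (welfare u π, #(univ.biUnion π))) fun π hπ hcov => ?_
  push Not at hcov
  obtain ⟨o, -, i, hoi, ho⟩ := hcov
  exact hπ.exists_lt hG hC hpart hoi (by simpa using ho)

end GoodsPhase

section ChoresPhase

open Function

variable {κ ι : Type*} [DecidableEq ι] {O : Finset ι} {u : κ → Finset ι → ℝ}
  {G C π : κ → Finset ι} {o : ι} {i : κ}

structure IsEF1Alloc (O : Finset ι) (u : κ → Finset ι → ℝ) (π : κ → Finset ι) : Prop where
  subset : ∀ i, π i ⊆ O
  disjoint : Pairwise (Disjoint on π)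
  ef1 : ∀ i j, EF1 (u i) (π i) (π j)

theorem IsGoodsEF1Alloc.isEF1Alloc (hπ : IsGoodsEF1Alloc u G π) (hpart : ∀ i, G i ∪ C i = O) :
    IsEF1Alloc O u π where
  subset := hπ.subset hpart
  disjoint := hπ.disjoint
  ef1 i j := by
    rcases eq_or_ne i j with rfl | hij
    · exact .inl le_rfl
    · exact (hπ.ef1Best hij).ef1 (hπ.disjoint hij)

variable (hC : ∀ i, IsGoodSet (-u i) O (C i))
include hC

theorem IsEF1Alloc.update_insert [DecidableEq κ] (hπ : IsEF1Alloc O u π) (hoO : o ∈ O)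
    (hoC : ∀ k, o ∈ C k) (ho : ∀ j, o ∉ π j) (hi : ∀ j, u i (π j) ≤ u i (π i)) :
    IsEF1Alloc O u (update π i (insert o (π i))) := by
  refine ⟨fun j => ?_, pairwise_disjoint_update_insert hπ.disjoint ho i, fun k l => ?_⟩
  · rcases eq_or_ne j i with rfl | hj
    · simpa using insert_subset hoO (hπ.subset j)
    · simpa [hj] using hπ.subset j
  rcases eq_or_ne k i with rfl | hk
  · rcases eq_or_ne l k with rfl | hl
    · exact .inl le_rfl
    · rw [update_self, update_of_ne hl]
      exact ef1_insert_left_of_le (hi l) (ho k) (ho l)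
  rw [update_of_ne hk]
  rcases eq_or_ne l i with rfl | hl
  · rw [update_self]
    exact (hπ.ef1 k l).insert_of_neg (hC k) (hπ.subset l) (hoC k) (ho k) (ho l)
  · rw [update_of_ne hl]
    exact hπ.ef1 k l

omit hC in
theorem IsEF1Alloc.comp_perm (hπ : IsEF1Alloc O u π) (σ : Equiv.Perm κ)
    (hσ : ∀ k, σ k ≠ k → ∀ j, u k (π j) ≤ u k (π (σ k))) : IsEF1Alloc O u (π ∘ σ) where
  subset j := hπ.subset (σ j)
  disjoint := hπ.disjoint.comp_of_injective σ.injective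
  ef1 k l := by
    by_cases hk : σ k = k
    · simpa only [comp_apply, hk] using hπ.ef1 k (σ l)
    · exact .inl (hσ k hk (σ l))

theorem IsEF1Alloc.exists_lt [Fintype κ] [DecidableEq κ] [Nonempty κ] (hπ : IsEF1Alloc O u π)
    (hoO : o ∈ O) (hoC : ∀ k, o ∈ C k) (ho : ∀ j, o ∉ π j) :
    ∃ π', IsEF1Alloc O u π' ∧ univ.biUnion π ⊆ univ.biUnion π' ∧
      toLex (#(univ.biUnion π), welfare u π) < toLex (#(univ.biUnion π'), welfare u π') := by
  by_cases hA : ∃ i, ∀ j, u i (π j) ≤ u i (π i)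
  · obtain ⟨i, hi⟩ := hA
    refine ⟨_, hπ.update_insert hC hoO hoC ho hi, ?_, Prod.Lex.toLex_lt_toLex.2 (.inl ?_)⟩
    · rw [biUnion_update_insert]
      exact subset_insert _ _
    · rw [biUnion_update_insert]
      exact card_lt_card (ssubset_insert (by simpa using ho))
  push Not at hA
  -- every agent envies someone, so the top-choice graph has a cycle
  obtain ⟨σ, hσ1, hσ⟩ := exists_perm_ne_one_of_forall_exists_rel
    (r := fun k j => u k (π k) < u k (π j) ∧ ∀ j', u k (π j') ≤ u k (π j))
    (s := Set.univ) Set.univ_nonempty fun k _ => by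
      obtain ⟨t, -, ht⟩ := univ.exists_max_image (fun j => u k (π j)) univ_nonempty
      obtain ⟨j, hj⟩ := hA k
      have hlt : u k (π k) < u k (π t) := hj.trans_le (ht j (mem_univ j))
      exact ⟨t, trivial, fun h => hlt.ne (by rw [h]), hlt, fun j => ht j (mem_univ j)⟩
  have hle k : u k (π k) ≤ u k (π (σ k)) := by
    by_cases hk : σ k = k
    · rw [hk]
    · exact (hσ k hk).1.le
  obtain ⟨j, hj⟩ : ∃ j, σ j ≠ j := by
    by_contra! h
    exact hσ1 (Equiv.ext h)
  refine ⟨π ∘ σ, hπ.comp_perm σ fun k hk => (hσ k hk).2, (biUnion_comp_perm π σ).ge,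
    Prod.Lex.toLex_lt_toLex.2 (.inr ⟨by rw [biUnion_comp_perm], ?_⟩)⟩
  exact sum_lt_sum (fun k _ => hle k) ⟨j, mem_univ j, (hσ j hj).1⟩

theorem exists_isEF1Alloc_biUnion_eq [Fintype κ] [DecidableEq κ] [Nonempty κ]
    (hpart : ∀ i, G i ∪ C i = O) {π₀ : κ → Finset ι} (hπ₀ : IsEF1Alloc O u π₀)
    (hgoods : ∀ o ∈ O, ∀ i, o ∈ G i → o ∈ univ.biUnion π₀) :
    ∃ π, IsEF1Alloc O u π ∧ univ.biUnion π = O := by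
  let s := {π | IsEF1Alloc O u π ∧ ∀ o ∈ O, ∀ i, o ∈ G i → o ∈ univ.biUnion π}
  have hs : s.Finite := (finite_setOf_forall_subset O).subset fun π hπ => hπ.1.subset
  obtain ⟨π, ⟨hπ, -⟩, hcov⟩ := hs.exists_of_forall_exists_lt ⟨π₀, hπ₀, hgoods⟩
    (fun π => toLex (#(univ.biUnion π), welfare u π))
    (q := fun π => O ⊆ univ.biUnion π) fun π ⟨hπ, hπG⟩ hcov => by
      obtain ⟨o, hoO, ho⟩ := not_subset.1 hcov
      have hoC k : o ∈ C k :=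
        (mem_union.1 (hpart k ▸ hoO)).resolve_left fun hoG => ho (hπG o hoO k hoG)
      obtain ⟨π', hπ', hsub, hlt⟩ := hπ.exists_lt hC hoO hoC (by simpa using ho)
      exact ⟨π', ⟨hπ', fun o ho i hoi => hsub (hπG o ho i hoi)⟩, hlt⟩
  exact ⟨π, hπ, (biUnion_subset.2 fun i _ => hπ.subset i).antisymm hcov⟩

end ChoresPhase

theorem exists_ef1_doubly_monotonic_general
    (n : ℕ) (hn : 0 < n) (ι : Type*) [DecidableEq ι] (O : Finset ι)
    (u : Fin n → Finset ι → ℝ)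
    (G C : Fin n → Finset ι)
    (hpart : ∀ i, G i ∪ C i = O)
    (hmono : ∀ (i : Fin n) (o : ι) (X : Finset ι), o ∈ O → X ⊆ O.erase o →
      (o ∈ G i → u i X ≤ u i (insert o X)) ∧
      (o ∈ C i → u i (insert o X) ≤ u i X)) :
    ∃ π : Fin n → Finset ι,
      (∀ i, π i ⊆ O) ∧
      (∀ i j : Fin n, i ≠ j → Disjoint (π i) (π j)) ∧
      (Finset.univ.biUnion π = O) ∧
      (∀ i j : Fin n,
        (u i (π j) ≤ u i (π i)) ∨
        (∃ o ∈ π i ∪ π j, u i ((π j).erase o) ≤ u i ((π i).erase o))) := by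
  have : Nonempty (Fin n) := ⟨⟨0, hn⟩⟩
  have hG i : IsGoodSet (u i) O (G i) := fun o ho X hX =>
    (hmono i o X (hpart i ▸ mem_union_left _ ho) hX).1 ho
  have hC i : IsGoodSet (-u i) O (C i) := fun o ho X hX =>
    neg_le_neg ((hmono i o X (hpart i ▸ mem_union_right _ ho) hX).2 ho)
  obtain ⟨π₀, hπ₀, hgoods⟩ := exists_isGoodsEF1Alloc_forall_mem_goods hG hC hpart
  obtain ⟨π, hπ, hcov⟩ := exists_isEF1Alloc_biUnion_eq hC hpart (hπ₀.isEF1Alloc hpart) hgoods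
  exact ⟨π, hπ.subset, hπ.disjoint, hcov, hπ.ef1⟩

/-- For doubly monotonic utilities over bundles, an EF1 complete
allocation exists. Each agent `i` partitions `O` into desirable items `G i`
and undesirable items `C i`. -/
theorem exists_ef1_doubly_monotonic
    (n : ℕ) (hn : 0 < n) (ι : Type*) [DecidableEq ι] (O : Finset ι)
    (u : Fin n → Finset ι → ℝ)
    (G C : Fin n → Finset ι)
    (hpart : ∀ i, G i ∪ C i = O)
    (hGC : ∀ i, Disjoint (G i) (C i))
    (hmono : ∀ (i : Fin n) (o : ι) (X : Finset ι), o ∈ O → X ⊆ O.erase o →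
      (o ∈ G i → u i X ≤ u i (insert o X)) ∧
      (o ∈ C i → u i (insert o X) ≤ u i X)) :
    ∃ π : Fin n → Finset ι,
      (∀ i, π i ⊆ O) ∧
      (∀ i j : Fin n, i ≠ j → Disjoint (π i) (π j)) ∧
      (Finset.univ.biUnion π = O) ∧
      (∀ i j : Fin n,
        (u i (π j) ≤ u i (π i)) ∨
        (∃ o ∈ π i ∪ π j, u i ((π j).erase o) ≤ u i ((π i).erase o))) :=
  exists_ef1_doubly_monotonic_general n hn ι O u G C hpart hmono
end

section
/- For every instance with two agents (N = {1,2}), a finite set O of indivisible items, and additive utilities u_1, u_2 : O → ℝ, there exists a complete allocation π that is simultaneously Pareto-optimal (no complete allocation π' satisfies u_i(π'(i)) ≥ u_i(π(i)) for both agents with strict inequality for at least one agent) and EF1 (for each agent i and the other agent j, either u_i(π(i)) ≥ u_i(π(j)) or there is an item o ∈ π(i) ∪ π(j) with u_i(π(i)∖{o}) ≥ u_i(π(j)∖{o})). -/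
/-!
Adjusted winner for goods and chores. For an exchange rate `c > 0`, give agent 0 a bundle `A` such
that `u₁ ≤ c * u₀` on `A` and `c * u₀ ≤ u₁` on `O ∖ A`; then `A` maximizes `c u₀(A) + u₁(O ∖ A)`,
so the allocation is Pareto-optimal. For `c` close to `0` such an allocation leaves agent 1
envy-free. While agent 0 is not EF1, raise `c` to the least ratio `u₁ o / u₀ o` among the items
`o` agent 0 would like to swap (positive items outside `A`, negative items inside `A`) and swap
that `o`: the allocation stays optimal, and agent 1 becomes EF1 up to `o`, because agent 0's envy
of the old allocation up to `o` turns, through the weighted inequalities, into agent 1's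
contentment. Every swap removes one swappable item, and without swappable items agent 0 is
envy-free.
-/

open Finset Filter Topology
open scoped symmDiff

namespace AdjustedWinner

variable {ι : Type*} [DecidableEq ι]

lemma mem_symmDiff_singleton_of_ne {s : Finset ι} {a b : ι} (h : b ≠ a) :
    b ∈ s ∆ {a} ↔ b ∈ s := by
  simp [mem_symmDiff, h]

lemma mem_symmDiff_singleton_self (s : Finset ι) (a : ι) : a ∈ s ∆ {a} ↔ a ∉ s := by
  simp [mem_symmDiff]

lemma erase_symmDiff_singleton (s : Finset ι) (a : ι) : (s ∆ {a}).erase a = s.erase a := by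
  ext b
  by_cases h : b = a <;> simp [h, mem_symmDiff]

lemma erase_sdiff_symmDiff_singleton (s t : Finset ι) (a : ι) :
    (s \ t ∆ {a}).erase a = (s \ t).erase a := by
  ext b
  by_cases h : b = a <;> simp [h, mem_symmDiff]

lemma symmDiff_singleton_subset {s t : Finset ι} {a : ι} (hs : s ⊆ t) (ha : a ∈ t) :
    s ∆ {a} ⊆ t := by
  intro b hb
  by_cases h : b = a
  · exact h ▸ ha
  · exact hs ((mem_symmDiff_singleton_of_ne h).1 hb)

def EFOne (v : ι → ℝ) (X Y : Finset ι) : Prop :=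
  ∑ p ∈ Y, v p ≤ ∑ p ∈ X, v p ∨ ∃ o ∈ X ∪ Y, ∑ p ∈ Y.erase o, v p ≤ ∑ p ∈ X.erase o, v p

/-- `A` is agent 0's bundle and `O \ A` agent 1's; every item goes to an agent whose value, with
agent 0's weighted by `c`, is largest. -/
def WeightedOptimal (u₀ u₁ : ι → ℝ) (c : ℝ) (O A : Finset ι) : Prop :=
  (∀ p ∈ A, u₁ p ≤ c * u₀ p) ∧ ∀ p ∈ O \ A, c * u₀ p ≤ u₁ p

noncomputable def swappable (u₀ : ι → ℝ) (O A : Finset ι) : Finset ι :=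
  O.filter fun p => (p ∈ A ∧ u₀ p < 0) ∨ (p ∉ A ∧ 0 < u₀ p)

section

variable {u₀ u₁ : ι → ℝ} {c : ℝ} {O A : Finset ι}

lemma mem_swappable {p : ι} :
    p ∈ swappable u₀ O A ↔ p ∈ O ∧ ((p ∈ A ∧ u₀ p < 0) ∨ (p ∉ A ∧ 0 < u₀ p)) :=
  mem_filter

lemma sum_sdiff_le_sum_of_swappable_eq_empty (hA : A ⊆ O) (h : swappable u₀ O A = ∅) :
    ∑ p ∈ O \ A, u₀ p ≤ ∑ p ∈ A, u₀ p :=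
  calc ∑ p ∈ O \ A, u₀ p ≤ 0 := sum_nonpos fun p hp => by
        obtain ⟨hpO, hpA⟩ := mem_sdiff.1 hp
        by_contra! hpos
        exact eq_empty_iff_forall_notMem.1 h p (mem_swappable.2 ⟨hpO, .inr ⟨hpA, hpos⟩⟩)
    _ ≤ ∑ p ∈ A, u₀ p := sum_nonneg fun p hpA => by
        by_contra! hneg
        exact eq_empty_iff_forall_notMem.1 h p (mem_swappable.2 ⟨hA hpA, .inl ⟨hpA, hneg⟩⟩)

lemma swappable_symmDiff_singleton_ssubset {o : ι} (ho : o ∈ swappable u₀ O A) :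
    swappable u₀ O (A ∆ {o}) ⊂ swappable u₀ O A := by
  refine ssubset_iff_of_subset (fun p hp => ?_) |>.2 ⟨o, ho, ?_⟩
  · by_cases h : p = o
    · exact h ▸ ho
    · simpa only [mem_swappable, mem_symmDiff_singleton_of_ne h] using hp
  · rw [mem_swappable] at ho
    rw [mem_swappable, mem_symmDiff_singleton_self, not_not]
    rcases ho with ⟨-, ⟨hoA, hneg⟩ | ⟨hoA, hpos⟩⟩ <;> rintro ⟨-, ⟨h, h'⟩ | ⟨h, h'⟩⟩ <;>
      first | contradiction | linarith

lemma weightedOptimal_filter : WeightedOptimal u₀ u₁ c O (O.filter fun p => u₁ p ≤ c * u₀ p) :=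
  ⟨fun _ hp => (mem_filter.1 hp).2, fun p hp => by
    rw [← filter_not, mem_filter, not_le] at hp
    exact hp.2.le⟩

lemma WeightedOptimal.weighted_sum_le (hopt : WeightedOptimal u₀ u₁ c O A) (hA : A ⊆ O)
    {B₀ B₁ : Finset ι} (hB : Disjoint B₀ B₁) (hBO : B₀ ∪ B₁ = O) :
    c * ∑ p ∈ B₀, u₀ p + ∑ p ∈ B₁, u₁ p ≤ c * ∑ p ∈ A, u₀ p + ∑ p ∈ O \ A, u₁ p := by
  let M p := max (c * u₀ p) (u₁ p)
  calc c * ∑ p ∈ B₀, u₀ p + ∑ p ∈ B₁, u₁ p ≤ ∑ p ∈ B₀, M p + ∑ p ∈ B₁, M p := by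
        rw [mul_sum]
        gcongr with p _ p _
        exacts [le_max_left _ _, le_max_right _ _]
    _ = ∑ p ∈ A, M p + ∑ p ∈ O \ A, M p := by
        rw [← sum_union hB, hBO, add_comm, sum_sdiff hA]
    _ = c * ∑ p ∈ A, u₀ p + ∑ p ∈ O \ A, u₁ p := by
        rw [mul_sum]
        congr 1 <;> refine sum_congr rfl fun p hp => ?_
        exacts [max_eq_left (hopt.1 p hp), max_eq_right (hopt.2 p hp)]

lemma WeightedOptimal.sums_eq_of_le (hopt : WeightedOptimal u₀ u₁ c O A) (hc : 0 < c)
    (hA : A ⊆ O) {B₀ B₁ : Finset ι} (hB : Disjoint B₀ B₁) (hBO : B₀ ∪ B₁ = O)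
    (h₀ : ∑ p ∈ A, u₀ p ≤ ∑ p ∈ B₀, u₀ p) (h₁ : ∑ p ∈ O \ A, u₁ p ≤ ∑ p ∈ B₁, u₁ p) :
    ∑ p ∈ B₀, u₀ p = ∑ p ∈ A, u₀ p ∧ ∑ p ∈ B₁, u₁ p = ∑ p ∈ O \ A, u₁ p := by
  have := hopt.weighted_sum_le hA hB hBO
  have : c * ∑ p ∈ A, u₀ p ≤ c * ∑ p ∈ B₀, u₀ p := by gcongr
  constructor <;> nlinarith

lemma WeightedOptimal.sum_lt_sum_of_sum_lt (hopt : WeightedOptimal u₀ u₁ c O A) (hc : 0 < c)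
    {B C : Finset ι} (hB : B ⊆ A) (hC : C ⊆ O \ A) (h : ∑ p ∈ B, u₀ p < ∑ p ∈ C, u₀ p) :
    ∑ p ∈ B, u₁ p < ∑ p ∈ C, u₁ p :=
  calc ∑ p ∈ B, u₁ p ≤ c * ∑ p ∈ B, u₀ p := by
        rw [mul_sum]; exact sum_le_sum fun p hp => hopt.1 p (hB hp)
    _ < c * ∑ p ∈ C, u₀ p := by gcongr
    _ ≤ ∑ p ∈ C, u₁ p := by
        rw [mul_sum]; exact sum_le_sum fun p hp => hopt.2 p (hC hp)

lemma WeightedOptimal.le_div_of_mem_swappable (hopt : WeightedOptimal u₀ u₁ c O A) {p : ι}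
    (hp : p ∈ swappable u₀ O A) : c ≤ u₁ p / u₀ p := by
  rcases (mem_swappable.1 hp).2 with ⟨hpA, hneg⟩ | ⟨hpA, hpos⟩
  · exact (le_div_iff_of_neg hneg).2 (hopt.1 p hpA)
  · exact (le_div_iff₀ hpos).2 (hopt.2 p (mem_sdiff.2 ⟨(mem_swappable.1 hp).1, hpA⟩))

lemma div_mul_cancel_of_mem_swappable {p : ι} (hp : p ∈ swappable u₀ O A) :
    u₁ p / u₀ p * u₀ p = u₁ p := by
  refine div_mul_cancel₀ _ ?_
  rcases (mem_swappable.1 hp).2 with ⟨-, h⟩ | ⟨-, h⟩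
  exacts [h.ne, h.ne']

lemma WeightedOptimal.symmDiff_singleton (hopt : WeightedOptimal u₀ u₁ c O A) (hA : A ⊆ O)
    {o : ι} (ho : o ∈ swappable u₀ O A)
    (hmin : ∀ p ∈ swappable u₀ O A, u₁ o / u₀ o ≤ u₁ p / u₀ p) :
    WeightedOptimal u₀ u₁ (u₁ o / u₀ o) O (A ∆ {o}) := by
  have hc := hopt.le_div_of_mem_swappable ho
  have hratio := div_mul_cancel_of_mem_swappable (u₁ := u₁) ho
  constructor
  · intro p hp
    by_cases hpo : p = o
    · rw [hpo, hratio]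
    have hpA := (mem_symmDiff_singleton_of_ne hpo).1 hp
    rcases lt_or_ge (u₀ p) 0 with hneg | hnn
    · have hsw : p ∈ swappable u₀ O A := mem_swappable.2 ⟨hA hpA, .inl ⟨hpA, hneg⟩⟩
      calc u₁ p = u₁ p / u₀ p * u₀ p := (div_mul_cancel_of_mem_swappable hsw).symm
        _ ≤ u₁ o / u₀ o * u₀ p := mul_le_mul_of_nonpos_right (hmin p hsw) hneg.le
    · calc u₁ p ≤ c * u₀ p := hopt.1 p hpA
        _ ≤ u₁ o / u₀ o * u₀ p := mul_le_mul_of_nonneg_right hc hnn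
  · intro p hp
    by_cases hpo : p = o
    · rw [hpo, hratio]
    obtain ⟨hpO, hpA⟩ := mem_sdiff.1 hp
    rw [mem_symmDiff_singleton_of_ne hpo] at hpA
    rcases lt_or_ge 0 (u₀ p) with hpos | hnp
    · have hsw : p ∈ swappable u₀ O A := mem_swappable.2 ⟨hpO, .inr ⟨hpA, hpos⟩⟩
      calc u₁ o / u₀ o * u₀ p ≤ u₁ p / u₀ p * u₀ p :=
            mul_le_mul_of_nonneg_right (hmin p hsw) hpos.le
        _ = u₁ p := div_mul_cancel_of_mem_swappable hsw
    · calc u₁ o / u₀ o * u₀ p ≤ c * u₀ p := mul_le_mul_of_nonpos_right hc hnp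
        _ ≤ u₁ p := hopt.2 p (mem_sdiff.2 ⟨hpO, hpA⟩)

lemma WeightedOptimal.efOne_symmDiff_singleton (hopt : WeightedOptimal u₀ u₁ c O A) (hc : 0 < c)
    (hA : A ⊆ O) (h₀ : ¬ EFOne u₀ A (O \ A)) {o : ι} (ho : o ∈ O) :
    EFOne u₁ (O \ A ∆ {o}) (A ∆ {o}) := by
  have henvy : ∑ p ∈ A.erase o, u₀ p < ∑ p ∈ (O \ A).erase o, u₀ p := by
    simp only [EFOne, not_or, not_exists, not_and, not_le] at h₀
    exact h₀.2 o (by rwa [union_sdiff_of_subset hA])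
  -- deleting `o` from both bundles of `A ∆ {o}` gives the pair that agent 0 compared above
  refine .inr ⟨o, ?_, ?_⟩
  · rwa [union_comm, union_sdiff_of_subset (symmDiff_singleton_subset hA ho)]
  · rw [erase_symmDiff_singleton, erase_sdiff_symmDiff_singleton]
    exact (hopt.sum_lt_sum_of_sum_lt hc (erase_subset _ _) (erase_subset _ _) henvy).le

theorem exists_weightedOptimal_efOne (hc : 0 < c) (hA : A ⊆ O)
    (hopt : WeightedOptimal u₀ u₁ c O A) (h₁ : EFOne u₁ (O \ A) A) :
    ∃ c > 0, ∃ A ⊆ O, WeightedOptimal u₀ u₁ c O A ∧ EFOne u₀ A (O \ A) ∧ EFOne u₁ (O \ A) A := by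
  induction hn : #(swappable u₀ O A) using Nat.strong_induction_on generalizing c A with
  | _ n ih =>
  by_cases h₀ : EFOne u₀ A (O \ A)
  · exact ⟨c, hc, A, hA, hopt, h₀, h₁⟩
  have hne : (swappable u₀ O A).Nonempty :=
    nonempty_iff_ne_empty.2 fun h => h₀ (.inl (sum_sdiff_le_sum_of_swappable_eq_empty hA h))
  obtain ⟨o, ho, hmin⟩ := (swappable u₀ O A).exists_min_image (fun p => u₁ p / u₀ p) hne
  have hoO : o ∈ O := (mem_swappable.1 ho).1
  exact ih _ (hn ▸ card_lt_card (swappable_symmDiff_singleton_ssubset ho))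
    (hc.trans_le (hopt.le_div_of_mem_swappable ho)) (symmDiff_singleton_subset hA hoO)
    (hopt.symmDiff_singleton hA ho hmin) (hopt.efOne_symmDiff_singleton hc hA h₀ hoO) rfl

end

theorem exists_weightedOptimal_sum_le_sum_sdiff (u₀ u₁ : ι → ℝ) (O : Finset ι) :
    ∃ c > 0, ∃ A ⊆ O, WeightedOptimal u₀ u₁ c O A ∧ ∑ p ∈ A, u₁ p ≤ ∑ p ∈ O \ A, u₁ p := by
  have hsmall : ∀ᶠ c in 𝓝 (0 : ℝ), ∀ p ∈ O,
      (0 < u₁ p → c * u₀ p < u₁ p) ∧ (u₁ p < 0 → u₁ p < c * u₀ p) := by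
    refine (eventually_all_finset O).2 fun p _ => ?_
    have hlim : Tendsto (fun c : ℝ => c * u₀ p) (𝓝 0) (𝓝 0) :=
      (continuous_mul_const (u₀ p)).tendsto' 0 0 (zero_mul _)
    simp only [eventually_and, eventually_imp_distrib_left]
    exact ⟨fun h => hlim.eventually_lt_const h, fun h => hlim.eventually_const_lt h⟩
  obtain ⟨c, hsign, hc⟩ := ((hsmall.filter_mono nhdsWithin_le_nhds).and
    (self_mem_nhdsWithin : ∀ᶠ c in 𝓝[>] (0 : ℝ), 0 < c)).exists
  refine ⟨c, hc, _, filter_subset _ O, weightedOptimal_filter, ?_⟩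
  calc ∑ p ∈ O.filter fun p => u₁ p ≤ c * u₀ p, u₁ p ≤ 0 := sum_nonpos fun p hp => by
        rw [mem_filter] at hp
        by_contra! h
        exact (hsign p hp.1).1 h |>.not_ge hp.2
    _ ≤ ∑ p ∈ O \ O.filter fun p => u₁ p ≤ c * u₀ p, u₁ p := sum_nonneg fun p hp => by
        rw [← filter_not, mem_filter, not_le] at hp
        by_contra! h
        exact (hsign p hp.1).2 h |>.asymm hp.2

end AdjustedWinner

open AdjustedWinner in
/-- For two agents with additive utilities, a complete allocation that
is simultaneously Pareto-optimal and EF1 always exists (generalized Adjusted Winner). -/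
theorem exists_pareto_optimal_ef1_two_agents
    (ι : Type*) [DecidableEq ι] (O : Finset ι)
    (u : Fin 2 → ι → ℝ) :
    ∃ π : Fin 2 → Finset ι,
      (∀ i, π i ⊆ O) ∧
      (∀ i j : Fin 2, i ≠ j → Disjoint (π i) (π j)) ∧
      (Finset.univ.biUnion π = O) ∧
      -- Pareto-optimality
      (¬ ∃ π' : Fin 2 → Finset ι,
        (∀ i, π' i ⊆ O) ∧
        (∀ i j : Fin 2, i ≠ j → Disjoint (π' i) (π' j)) ∧
        (Finset.univ.biUnion π' = O) ∧
        (∀ i : Fin 2, ∑ o ∈ π i, u i o ≤ ∑ o ∈ π' i, u i o) ∧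
        (∃ i : Fin 2, ∑ o ∈ π i, u i o < ∑ o ∈ π' i, u i o)) ∧
      -- EF1
      (∀ i j : Fin 2,
        (∑ o ∈ π j, u i o ≤ ∑ o ∈ π i, u i o) ∨
        (∃ o ∈ π i ∪ π j,
          ∑ p ∈ (π j).erase o, u i p ≤ ∑ p ∈ (π i).erase o, u i p)) := by
  have hbiUnion (π : Fin 2 → Finset ι) : univ.biUnion π = π 0 ∪ π 1 := by
    ext; simp [Fin.exists_fin_two]
  obtain ⟨c₀, hc₀, A₀, hA₀, hopt₀, hfree⟩ := exists_weightedOptimal_sum_le_sum_sdiff (u 0) (u 1) O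
  obtain ⟨c, hc, A, hA, hopt, h₀, h₁⟩ := exists_weightedOptimal_efOne hc₀ hA₀ hopt₀ (.inl hfree)
  refine ⟨![A, O \ A], ?_, ?_, ?_, ?_, ?_⟩
  · simp [Fin.forall_fin_two, hA]
  · simp [Fin.forall_fin_two, disjoint_sdiff, sdiff_disjoint]
  · simp [hbiUnion, union_sdiff_of_subset hA]
  · rintro ⟨π', -, hdisj, hcov, hle, i, hlt⟩
    obtain ⟨heq₀, heq₁⟩ := hopt.sums_eq_of_le hc hA (hdisj 0 1 (by decide))
      (by rw [← hbiUnion, hcov]) (hle 0) (hle 1)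
    fin_cases i
    exacts [hlt.ne' heq₀, hlt.ne' heq₁]
  · intro i j
    fin_cases i <;> fin_cases j
    exacts [.inl le_rfl, h₀, h₁, .inl le_rfl]
end

section
/- Let O = (o_1,…,o_m) be items placed on a line and let n agents have additive utilities u_i : O → ℝ. Consider the mixed cake [0,m] where agent i has constant value density u_i(o_j) on the subinterval [j−1, j] for each j ∈ {1,…,m}, so that agent i's value of a subinterval [a,b] ⊆ [0,m] is V_i([a,b]) = ∑_{j=1}^m u_i(o_j)·length([a,b] ∩ [j−1,j]). Then there exist cut points 0 = x_0 ≤ x_1 ≤ ⋯ ≤ x_n = m and a bijection σ from the agents to {1,…,n} such that for every agent i, V_i([x_{σ(i)−1}, x_{σ(i)}]) ≥ V_i([0,m])/n; that is, a contiguous proportional allocation of the mixed cake exists. -/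
/-!
Induction on the number of agents, with agent `i` demanding `d i` and each agent valuing the
remaining cake at least `(number of agents) * d i`. If all demands are positive, or all are
non-positive, sweep a cut `t` across `[a, b]`: the set `L` of cuts where nobody is content with
`[a, t]` and the set `R` of cuts where two agents reject `[t, b]` are open and disjoint, and `L`
and `R` each contain an endpoint. Were there no cut at which some agent is content with `[a, t]`
while all others accept `[t, b]`, they would cover `[a, b]`, contradicting connectedness. At such
a cut one agent leaves with `[a, t]` and the others recurse on `[t, b]`. With demands of mixed
signs, an agent with a non-positive demand takes the empty piece `[a, a]` instead.

The mixed cake enters only through the continuous cumulative valuations `t ↦ V_i([0, t])`.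
-/

/-- The value of the subinterval `[a,b]` of the mixed cake `[0,m]` for an agent with
piecewise-constant density: density `u j` on the unit interval `[j, j+1]` for
`j = 0, …, m-1` (these are the items `o_1, …, o_m`). -/
noncomputable def pieceValue (m : ℕ) (u : Fin m → ℝ) (a b : ℝ) : ℝ :=
  ∑ j : Fin m, u j * max 0 (min b ((j : ℝ) + 1) - max a (j : ℝ))

open Set

theorem pieceValue_eq_sub (m : ℕ) (u : Fin m → ℝ) {a b : ℝ} (hab : a ≤ b) :
    pieceValue m u a b = pieceValue m u 0 b - pieceValue m u 0 a := by
  have overlap_eq_sub {c e : ℝ} (hc : 0 ≤ c) :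
      max 0 (min b e - max a c) = max 0 (min b e - max 0 c) - max 0 (min a e - max 0 c) := by
    grind
  simp only [pieceValue, ← Finset.sum_sub_distrib, ← mul_sub,
    overlap_eq_sub (Nat.cast_nonneg _)]

theorem continuous_pieceValue (m : ℕ) (u : Fin m → ℝ) (a : ℝ) :
    Continuous (pieceValue m u a) := by
  unfold pieceValue
  fun_prop

theorem exists_cut_of_sameSign {n : ℕ} {F : Fin (n + 1) → ℝ → ℝ} (hF : ∀ i, Continuous (F i))
    {d : Fin (n + 1) → ℝ} {a b : ℝ} (hab : a ≤ b)
    (hd : ∀ i, ((n : ℝ) + 1) * d i ≤ F i b - F i a)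
    (hsign : (∀ i, 0 < d i) ∨ (∀ i, d i ≤ 0)) :
    ∃ t ∈ Icc a b, ∃ i, d i ≤ F i t - F i a ∧ ∀ j ≠ i, n * d j ≤ F j b - F j t := by
  by_contra! hcut
  set L := {t | ∀ i, F i t - F i a < d i}
  set R := {t | ∃ i j, i ≠ j ∧ F i b - F i t < n * d i ∧ F j b - F j t < n * d j}
  have hL : IsOpen L := by
    simp only [L, ofPred_forall]
    exact isOpen_iInter_of_finite fun i => isOpen_lt ((hF i).sub continuous_const) continuous_const
  have hR : IsOpen R := by
    simp only [R, ofPred_exists, ofPred_and]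
    refine isOpen_iUnion fun i => isOpen_iUnion fun j => isOpen_const.inter (IsOpen.inter ?_ ?_) <;>
      exact isOpen_lt (continuous_const.sub (hF _)) continuous_const
  have content_of_reject {t : ℝ} {i} (hi : F i b - F i t < n * d i) : d i ≤ F i t - F i a := by
    linarith [hd i]
  have hLR : ∀ t ∈ L, t ∉ R := by
    rintro t htL ⟨i, -, -, hi, -⟩
    exact (htL i).not_ge (content_of_reject hi)
  have hcover : Icc a b ⊆ L ∪ R := by
    intro t ht
    rw [mem_union, or_iff_not_imp_right]
    intro htR
    by_contra htL
    obtain ⟨i, hi⟩ : ∃ i, d i ≤ F i t - F i a := by simpa [L] using htL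
    obtain ⟨j, hji, hj⟩ := hcut t ht i hi
    obtain ⟨k, hkj, hk⟩ := hcut t ht j (content_of_reject hj)
    exact htR ⟨k, j, hkj, hk, hj⟩
  have ha : a ∈ Icc a b := left_mem_Icc.2 hab
  have hb : b ∈ Icc a b := right_mem_Icc.2 hab
  have hLR_nonempty : (Icc a b ∩ L).Nonempty ∧ (Icc a b ∩ R).Nonempty := by
    rcases hsign with hpos | hnonpos
    · have haL : a ∈ L := fun i => by simpa using hpos i
      have hbL : b ∉ L := fun h =>
        (h 0).not_ge (by nlinarith [hd 0, hpos 0, n.cast_nonneg (α := ℝ)])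
      exact ⟨⟨a, ha, haL⟩, ⟨b, hb, (hcover hb).resolve_left hbL⟩⟩
    · have haL : a ∉ L := fun h => (h 0).not_ge (by simpa using hnonpos 0)
      have hbR : b ∉ R := by
        rintro ⟨i, -, -, hi, -⟩
        rw [sub_self] at hi
        exact hi.not_ge (mul_nonpos_of_nonneg_of_nonpos n.cast_nonneg (hnonpos i))
      exact ⟨⟨b, hb, (hcover hb).resolve_right hbR⟩, ⟨a, ha, (hcover ha).resolve_left haL⟩⟩
  obtain ⟨t, -, htL, htR⟩ := isPreconnected_Icc L R hL hR hcover hLR_nonempty.1 hLR_nonempty.2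
  exact hLR t htL htR

/-- `F i` is agent `i`'s cumulative valuation: she values `[x, y]` at `F i y - F i x`. -/
def HasContiguousAllocation {n : ℕ} (F : Fin n → ℝ → ℝ) (d : Fin n → ℝ) (a b : ℝ) : Prop :=
  ∃ (x : ℕ → ℝ) (σ : Equiv.Perm (Fin n)), x 0 = a ∧ x n = b ∧
    (∀ k, k < n → x k ≤ x (k + 1)) ∧ ∀ i, d i ≤ F i (x (σ i + 1)) - F i (x (σ i))

namespace HasContiguousAllocation

theorem nil (F : Fin 0 → ℝ → ℝ) (d : Fin 0 → ℝ) (b : ℝ) : HasContiguousAllocation F d b b :=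
  ⟨fun _ => b, 1, rfl, rfl, fun _ h => (Nat.not_lt_zero _ h).elim, fun i => i.elim0⟩

theorem cons {n : ℕ} {F : Fin (n + 1) → ℝ → ℝ} {d : Fin (n + 1) → ℝ} {a t b : ℝ} (i : Fin (n + 1))
    (hat : a ≤ t) (hi : d i ≤ F i t - F i a)
    (h : HasContiguousAllocation (fun j => F (i.succAbove j)) (fun j => d (i.succAbove j)) t b) :
    HasContiguousAllocation F d a b := by
  obtain ⟨x, τ, hx0, hxn, hmono, hval⟩ := h
  refine ⟨fun | 0 => a | k + 1 => x k,
    (finSuccEquiv' i).trans ((Equiv.optionCongr τ).trans (finSuccEquiv n).symm),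
    rfl, hxn, ?_, ?_⟩
  · rintro (_ | k) hk
    · simpa [hx0] using hat
    · exact hmono k (by omega)
  · intro j
    obtain rfl | ⟨j, rfl⟩ := Fin.eq_self_or_eq_succAbove i j
    · simpa [finSuccEquiv'_at, hx0] using hi
    · simpa [finSuccEquiv'_succAbove] using hval j

theorem of_sameSign {n : ℕ} {F : Fin (n + 1) → ℝ → ℝ} (hF : ∀ i, Continuous (F i))
    {d : Fin (n + 1) → ℝ} {a b : ℝ} (hab : a ≤ b)
    (hd : ∀ i, ((n : ℝ) + 1) * d i ≤ F i b - F i a)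
    (hsign : (∀ i, 0 < d i) ∨ (∀ i, d i ≤ 0)) :
    HasContiguousAllocation F d a b := by
  induction n generalizing a with
  | zero => exact cons 0 hab (by simpa using hd 0) (nil _ _ b)
  | succ n ih =>
    obtain ⟨t, ⟨hat, htb⟩, i, hi, hrest⟩ := exists_cut_of_sameSign hF hab hd hsign
    refine cons i hat hi (ih (fun _ => hF _) htb (fun j => ?_) ?_)
    · exact_mod_cast hrest _ (Fin.succAbove_ne i j)
    · exact hsign.imp (fun h _ => h _) (fun h _ => h _)

theorem of_exists_pos {n : ℕ} {F : Fin (n + 1) → ℝ → ℝ} (hF : ∀ i, Continuous (F i))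
    {d : Fin (n + 1) → ℝ} {a b : ℝ} (hab : a ≤ b)
    (hd : ∀ i, 0 < d i → ((n : ℝ) + 1) * d i ≤ F i b - F i a) (hex : ∃ i, 0 < d i) :
    HasContiguousAllocation F d a b := by
  induction n with
  | zero =>
    obtain ⟨j, hj⟩ := hex
    have hpos (i : Fin 1) : 0 < d i := by rwa [Subsingleton.elim i j]
    exact of_sameSign hF hab (fun i => hd i (hpos i)) (Or.inl hpos)
  | succ n ih =>
    by_cases hpos : ∀ i, 0 < d i
    · exact of_sameSign hF hab (fun i => hd i (hpos i)) (Or.inl hpos)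
    push Not at hpos
    obtain ⟨i, hi⟩ := hpos
    obtain ⟨j, hj⟩ := hex
    obtain ⟨k, rfl⟩ := Fin.exists_succAbove_eq (ne_of_apply_ne d (hi.trans_lt hj).ne')
    refine cons i le_rfl (by simpa using hi) (ih (fun _ => hF _) (fun l hl => ?_) ⟨k, hj⟩)
    have := hd _ hl
    push_cast at this
    linarith

end HasContiguousAllocation

/-- A contiguous proportional allocation of a mixed cake exists:
there are cut points `0 = x_0 ≤ x_1 ≤ ⋯ ≤ x_n = m` and a bijection `σ` of the agents
to the pieces such that every agent values her piece at least `V_i([0,m])/n`. -/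
theorem exists_contiguous_proportional_mixed_cake
    (n m : ℕ) (hn : 0 < n) (u : Fin n → Fin m → ℝ) :
    ∃ (x : ℕ → ℝ) (σ : Equiv.Perm (Fin n)),
      x 0 = 0 ∧ x n = (m : ℝ) ∧
      (∀ k, k < n → x k ≤ x (k + 1)) ∧
      (∀ i : Fin n,
        pieceValue m (u i) 0 (m : ℝ) / n ≤
          pieceValue m (u i) (x (σ i : ℕ)) (x ((σ i : ℕ) + 1))) := by
  obtain ⟨n, rfl⟩ := Nat.exists_eq_add_one_of_ne_zero hn.ne'
  set F : Fin (n + 1) → ℝ → ℝ := fun i => pieceValue m (u i) 0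
  set d : Fin (n + 1) → ℝ := fun i => pieceValue m (u i) 0 m / (n + 1 : ℕ)
  have hF (i : Fin (n + 1)) : Continuous (F i) := continuous_pieceValue m (u i) 0
  have hd (i : Fin (n + 1)) : ((n : ℝ) + 1) * d i = F i m - F i 0 := by
    simp only [d, F, ← pieceValue_eq_sub m (u i) m.cast_nonneg]
    push_cast
    field_simp
  have halloc : HasContiguousAllocation F d 0 m := by
    by_cases hex : ∃ i, 0 < d i
    · exact .of_exists_pos hF m.cast_nonneg (fun i _ => (hd i).le) hex
    · exact .of_sameSign hF m.cast_nonneg (fun i => (hd i).le) (.inr (by simpa using hex))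
  obtain ⟨x, σ, hx0, hxn, hmono, hval⟩ := halloc
  refine ⟨x, σ, hx0, hxn, hmono, fun i => ?_⟩
  rw [pieceValue_eq_sub m (u i) (hmono _ (σ i).isLt)]
  exact hval i
end

section
/- Let o_1,…,o_m be indivisible items arranged on a path in this order, and let N = {1,…,n} be agents with additive utilities u_i : O → ℝ. Then there exists a complete allocation π in which every bundle π(i) is connected on the path (a set of consecutive items, possibly empty) and which satisfies PROP1: for every agent i, either u_i(π(i)) ≥ u_i(O)/n, or u_i(π(i)) + u_i(o) ≥ u_i(O)/n for some o ∈ O∖π(i), or u_i(π(i)) − u_i(o) ≥ u_i(O)/n for some o ∈ π(i). -/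
/-!
Let `t i = u_i(O) / n`. If some share `t i` is positive, only the agents with positive share are
served (the others are content with nothing); otherwise everybody is. The path is then cut from
left to right, keeping the invariant that each of the `k` agents still waiting values the items
`s, …, m - 1` at least `k * t j`.

Call a cut point `c` safe if every waiting agent values the items from `c` on at least
`(k - 1) * t j`. For positive shares `s` is safe and `m` is not: at the last safe `c`, an agent for
whom `c + 1` is unsafe takes `s, …, c - 1`, and item `c` would lift it to its share. For
nonpositive shares `m` is safe: if `s` is too, someone takes nothing; otherwise, at the first safe
`c + 1`, an agent for whom `c` is unsafe takes `s, …, c`, and dropping item `c` would lift it to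
its share.
-/

open Finset

theorem Nat.exists_le_lt_and_not_succ {p : ℕ → Prop} {a b : ℕ} (hab : a ≤ b) (ha : p a)
    (hb : ¬ p b) : ∃ c, a ≤ c ∧ c < b ∧ p c ∧ ¬ p (c + 1) := by
  induction b, hab using Nat.le_induction with
  | base => exact absurd ha hb
  | succ b hab ih =>
    by_cases hp : p b
    · exact ⟨b, hab, b.lt_succ_self, hp, hb⟩
    · obtain ⟨c, hac, hcb, hc, hc1⟩ := ih hp
      exact ⟨c, hac, hcb.trans b.lt_succ_self, hc, hc1⟩

namespace PathAllocation

def IsProp1 {α : Type*} [Fintype α] [DecidableEq α] (f : α → ℝ) (t : ℝ) (B : Finset α) : Prop :=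
  t ≤ ∑ o ∈ B, f o ∨
    (∃ o ∈ univ \ B, t ≤ (∑ p ∈ B, f p) + f o) ∨
    ∃ o ∈ B, t ≤ (∑ p ∈ B, f p) - f o

section Tail

variable {m : ℕ}

def tail (s : ℕ) : Finset (Fin m) := {o | s ≤ (o : ℕ)}

@[simp]
theorem mem_tail {s : ℕ} {o : Fin m} : o ∈ tail s ↔ s ≤ (o : ℕ) := by
  simp [tail]

theorem tail_zero : tail 0 = (univ : Finset (Fin m)) := by
  ext; simp

theorem tail_self : tail m = (∅ : Finset (Fin m)) := by
  ext o; simp [o.isLt]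

theorem tail_subset_tail {s c : ℕ} (h : s ≤ c) : (tail c : Finset (Fin m)) ⊆ tail s := by
  intro o; simp only [mem_tail]; omega

theorem sum_tail_eq_add (f : Fin m → ℝ) {c : ℕ} (hc : c < m) :
    ∑ o ∈ tail c, f o = f ⟨c, hc⟩ + ∑ o ∈ tail (c + 1), f o := by
  have htail : tail c = insert ⟨c, hc⟩ (tail (c + 1)) := by
    ext o; simp only [mem_tail, mem_insert, Fin.ext_iff]; omega
  rw [htail, sum_insert (by simp)]

theorem sum_tail_sdiff (f : Fin m → ℝ) {s c : ℕ} (h : s ≤ c) :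
    ∑ o ∈ tail s \ tail c, f o = ∑ o ∈ tail s, f o - ∑ o ∈ tail c, f o :=
  sum_sdiff_eq_sub (tail_subset_tail h)

theorem ordConnected_tail_sdiff (s c : ℕ) :
    (↑(tail s \ tail c : Finset (Fin m)) : Set (Fin m)).OrdConnected :=
  ⟨fun x hx y hy z hz => by
    simp only [coe_sdiff, Set.mem_sdiff, mem_coe, mem_tail, Set.mem_Icc, Fin.le_def] at hx hy hz ⊢
    omega⟩

end Tail

section Cut

variable {m : ℕ} {ι : Type*} (u : ι → Fin m → ℝ) (t : ι → ℝ) {A : Finset ι} {s : ℕ}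

theorem exists_cut_of_pos (hA : 1 < #A) (ht : ∀ j ∈ A, 0 < t j) (hs : s ≤ m)
    (hinv : ∀ j ∈ A, #A * t j ≤ ∑ o ∈ tail s, u j o) :
    ∃ i ∈ A, ∃ c, s ≤ c ∧ c ≤ m ∧ (∀ j ∈ A, (#A - 1) * t j ≤ ∑ o ∈ tail c, u j o) ∧
      IsProp1 (u i) (t i) (tail s \ tail c) := by
  set safe : ℕ → Prop := fun c => ∀ j ∈ A, (#A - 1) * t j ≤ ∑ o ∈ tail c, u j o
  have hcard : (1 : ℝ) < #A := by exact_mod_cast hA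
  have hs_safe : safe s := fun j hj => by linarith [hinv j hj, ht j hj]
  have hm_unsafe : ¬ safe m := by
    obtain ⟨j, hj⟩ := card_pos.1 (by omega : 0 < #A)
    intro h
    have := h j hj
    rw [tail_self, sum_empty] at this
    nlinarith [ht j hj]
  obtain ⟨c, hsc, hcm, hc, hc1⟩ := Nat.exists_le_lt_and_not_succ hs hs_safe hm_unsafe
  obtain ⟨i, hi, hlt⟩ : ∃ i ∈ A, ∑ o ∈ tail (c + 1), u i o < (#A - 1) * t i := by
    simpa [safe] using hc1
  refine ⟨i, hi, c, hsc, hcm.le, hc, Or.inr (Or.inl ⟨⟨c, hcm⟩, by simp, ?_⟩)⟩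
  rw [sum_tail_sdiff _ hsc]
  linarith [hinv i hi, sum_tail_eq_add (u i) hcm]

theorem exists_cut_of_nonpos (hA : A.Nonempty) (ht : ∀ j ∈ A, t j ≤ 0) (hs : s ≤ m)
    (hinv : ∀ j ∈ A, #A * t j ≤ ∑ o ∈ tail s, u j o) :
    ∃ i ∈ A, ∃ c, s ≤ c ∧ c ≤ m ∧ (∀ j ∈ A, (#A - 1) * t j ≤ ∑ o ∈ tail c, u j o) ∧
      IsProp1 (u i) (t i) (tail s \ tail c) := by
  set safe : ℕ → Prop := fun c => ∀ j ∈ A, (#A - 1) * t j ≤ ∑ o ∈ tail c, u j o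
  by_cases hs_safe : safe s
  · obtain ⟨i, hi⟩ := hA
    exact ⟨i, hi, s, le_rfl, hs, hs_safe, Or.inl (by simpa using ht i hi)⟩
  have hcard : (1 : ℝ) ≤ #A := by exact_mod_cast hA.card_pos
  have hm_safe : safe m := fun j hj => by
    rw [tail_self, sum_empty]
    exact mul_nonpos_of_nonneg_of_nonpos (by linarith) (ht j hj)
  obtain ⟨c, hsc, hcm, hc, hc1⟩ :=
    Nat.exists_le_lt_and_not_succ (p := fun c => ¬ safe c) hs hs_safe (not_not.2 hm_safe)
  obtain ⟨i, hi, hlt⟩ : ∃ i ∈ A, ∑ o ∈ tail c, u i o < (#A - 1) * t i := by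
    simpa [safe] using hc
  refine ⟨i, hi, c + 1, by omega, hcm, not_not.1 hc1,
    Or.inr (Or.inr ⟨⟨c, hcm⟩, by simpa using hsc, ?_⟩)⟩
  rw [sum_tail_sdiff (u i) (by omega : s ≤ c + 1)]
  linarith [hinv i hi, sum_tail_eq_add (u i) hcm]

end Cut

section Assignment

variable {m : ℕ} {ι : Type*} [DecidableEq ι]

def bundleFrom (own : Fin m → ι) (s : ℕ) (j : ι) : Finset (Fin m) := {o | s ≤ (o : ℕ) ∧ own o = j}

theorem disjoint_bundleFrom (own : Fin m → ι) (s : ℕ) {i j : ι} (hij : i ≠ j) :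
    Disjoint (bundleFrom own s i) (bundleFrom own s j) :=
  disjoint_filter.2 fun _ _ hi hj => hij (hi.2.symm.trans hj.2)

theorem biUnion_bundleFrom_zero [Fintype ι] (own : Fin m → ι) :
    univ.biUnion (bundleFrom own 0) = univ :=
  eq_univ_of_forall fun o => mem_biUnion.2 ⟨own o, mem_univ _, by simp [bundleFrom]⟩

structure IsConnectedProp1Assignment (u : ι → Fin m → ℝ) (t : ι → ℝ) (A : Finset ι) (s : ℕ)
    (own : Fin m → ι) : Prop where
  mem : ∀ o : Fin m, s ≤ (o : ℕ) → own o ∈ A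
  ordConnected : ∀ j ∈ A, (↑(bundleFrom own s j) : Set (Fin m)).OrdConnected
  isProp1 : ∀ j ∈ A, IsProp1 (u j) (t j) (bundleFrom own s j)

variable {u : ι → Fin m → ℝ} {t : ι → ℝ} {A : Finset ι} {s : ℕ} {own : Fin m → ι}

theorem isConnectedProp1Assignment_empty (own : Fin m → ι) :
    IsConnectedProp1Assignment u t ∅ m own where
  mem o ho := absurd o.isLt (by omega)
  ordConnected _ h := absurd h (notMem_empty _)
  isProp1 _ h := absurd h (notMem_empty _)

theorem IsConnectedProp1Assignment.bundleFrom_eq_empty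
    (h : IsConnectedProp1Assignment u t A s own) {j : ι} (hj : j ∉ A) :
    bundleFrom own s j = ∅ :=
  filter_false_of_mem fun o _ ho => hj (ho.2 ▸ h.mem o ho.1)

theorem IsConnectedProp1Assignment.cons {i : ι} {c : ℕ}
    (h : IsConnectedProp1Assignment u t (A.erase i) c own) (hi : i ∈ A) (hsc : s ≤ c)
    (hprop : IsProp1 (u i) (t i) (tail s \ tail c)) :
    IsConnectedProp1Assignment u t A s (fun o => if (o : ℕ) < c then i else own o) := by
  set own' : Fin m → ι := fun o => if (o : ℕ) < c then i else own o
  have hown_ne (o : Fin m) (ho : c ≤ (o : ℕ)) : own o ≠ i := ne_of_mem_erase (h.mem o ho)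
  have hbundle_self : bundleFrom own' s i = tail s \ tail c := by
    ext o
    have := hown_ne o
    simp only [own', bundleFrom, mem_filter, mem_univ, true_and, mem_sdiff, mem_tail]
    split_ifs <;> grind
  have hbundle_ne (j : ι) (hji : j ≠ i) : bundleFrom own' s j = bundleFrom own c j := by
    ext o
    simp only [own', bundleFrom, mem_filter, mem_univ, true_and]
    split_ifs <;> grind
  refine ⟨fun o ho => ?_, fun j hj => ?_, fun j hj => ?_⟩
  · by_cases hoc : (o : ℕ) < c
    · simpa [own', hoc] using hi
    · simpa [own', hoc] using mem_of_mem_erase (h.mem o (by omega))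
  · rcases eq_or_ne j i with rfl | hji
    · rw [hbundle_self]; exact ordConnected_tail_sdiff s c
    · rw [hbundle_ne j hji]; exact h.ordConnected j (mem_erase.2 ⟨hji, hj⟩)
  · rcases eq_or_ne j i with rfl | hji
    · rw [hbundle_self]; exact hprop
    · rw [hbundle_ne j hji]; exact h.isProp1 j (mem_erase.2 ⟨hji, hj⟩)

theorem exists_isConnectedProp1Assignment (u : ι → Fin m → ℝ) (t : ι → ℝ) (hA : A.Nonempty)
    (hs : s ≤ m) (hsign : (∀ j ∈ A, 0 < t j) ∨ ∀ j ∈ A, t j ≤ 0)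
    (hinv : ∀ j ∈ A, #A * t j ≤ ∑ o ∈ tail s, u j o) :
    ∃ own, IsConnectedProp1Assignment u t A s own := by
  induction A using strongInduction generalizing s with
  | H A ih =>
    rcases (one_le_card.2 hA).eq_or_lt with hcard | hcard
    · obtain ⟨i, rfl⟩ := card_eq_one.1 hcard.symm
      have hempty : IsConnectedProp1Assignment u t (({i} : Finset ι).erase i) m fun _ => i := by
        rw [erase_singleton]; exact isConnectedProp1Assignment_empty _
      have hprop : IsProp1 (u i) (t i) (tail s \ tail m) := by
        rw [tail_self, sdiff_empty]
        exact Or.inl (by simpa using hinv i (mem_singleton_self i))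
      exact ⟨_, hempty.cons (mem_singleton_self i) hs hprop⟩
    · obtain ⟨i, hi, c, hsc, hcm, hsafe, hprop⟩ := hsign.elim
        (fun hpos => exists_cut_of_pos u t hcard hpos hs hinv)
        (fun hneg => exists_cut_of_nonpos u t hA hneg hs hinv)
      have hsub : A.erase i ⊆ A := erase_subset i A
      obtain ⟨own, hown⟩ := ih (A.erase i) (erase_ssubset hi)
        (card_pos.1 (by rw [card_erase_of_mem hi]; omega)) hcm
        (hsign.imp (fun h j hj => h j (hsub hj)) (fun h j hj => h j (hsub hj)))
        (fun j hj => by rw [cast_card_erase_of_mem hi]; exact hsafe j (hsub hj))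
      exact ⟨_, hown.cons hi hsc hprop⟩

end Assignment

theorem exists_finset_sign_uniform {ι : Type*} [Fintype ι] [Nonempty ι] (t : ι → ℝ) :
    ∃ A : Finset ι, A.Nonempty ∧ ((∀ j ∈ A, 0 < t j) ∨ ∀ j ∈ A, t j ≤ 0) ∧
      (∀ j ∈ A, #A * t j ≤ Fintype.card ι * t j) ∧ ∀ j ∉ A, t j ≤ 0 := by
  classical
  by_cases h : ∃ i, 0 < t i
  · obtain ⟨i, hi⟩ := h
    refine ⟨({j | 0 < t j} : Finset ι), ⟨i, by simpa using hi⟩,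
      Or.inl fun j hj => by simpa using hj, fun j hj => ?_, fun j hj => by simpa using hj⟩
    exact mul_le_mul_of_nonneg_right (by exact_mod_cast card_le_univ _)
      (by simp only [mem_filter, mem_univ, true_and] at hj; exact hj.le)
  · push Not at h
    exact ⟨univ, univ_nonempty, Or.inr fun j _ => h j, fun j _ => by rw [card_univ],
      fun j hj => absurd (mem_univ j) hj⟩

end PathAllocation

open PathAllocation in
/-- For items `o_1, …, o_m` arranged on a path (modeled as `Fin m` with
its natural order) and additive utilities, there exists a complete allocation in which
every bundle is a set of consecutive items (possibly empty) and which satisfies PROP1. -/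
theorem exists_connected_prop1_allocation
    (n m : ℕ) (hn : 0 < n)
    (u : Fin n → Fin m → ℝ) :
    ∃ π : Fin n → Finset (Fin m),
      (∀ i j : Fin n, i ≠ j → Disjoint (π i) (π j)) ∧
      (Finset.univ.biUnion π = Finset.univ) ∧
      -- each bundle is connected on the path (a set of consecutive items)
      (∀ i : Fin n, ∀ a b c : Fin m,
        a ∈ π i → c ∈ π i → a ≤ b → b ≤ c → b ∈ π i) ∧
      -- PROP1
      (∀ i : Fin n,
        ((∑ o : Fin m, u i o) / n ≤ ∑ o ∈ π i, u i o) ∨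
        (∃ o ∈ Finset.univ \ π i,
          (∑ o : Fin m, u i o) / n ≤ (∑ p ∈ π i, u i p) + u i o) ∨
        (∃ o ∈ π i,
          (∑ o : Fin m, u i o) / n ≤ (∑ p ∈ π i, u i p) - u i o)) := by
  have : Nonempty (Fin n) := ⟨⟨0, hn⟩⟩
  set t : Fin n → ℝ := fun i => (∑ o, u i o) / n
  have hshare (i : Fin n) : (n : ℝ) * t i = ∑ o, u i o :=
    mul_div_cancel₀ _ (Nat.cast_ne_zero.2 hn.ne')
  obtain ⟨A, hA, hsign, hcard, hout⟩ := exists_finset_sign_uniform t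
  obtain ⟨own, hown⟩ := exists_isConnectedProp1Assignment u t hA (Nat.zero_le m) hsign
    fun j hj => by simpa [tail_zero, hshare] using hcard j hj
  refine ⟨bundleFrom own 0, fun i j => disjoint_bundleFrom own 0, biUnion_bundleFrom_zero own,
    fun i a b c ha hc hab hbc => ?_, fun i => ?_⟩
  · by_cases hi : i ∈ A
    · exact (hown.ordConnected i hi).out ha hc ⟨hab, hbc⟩
    · simp [hown.bundleFrom_eq_empty hi] at ha
  · by_cases hi : i ∈ A
    · exact hown.isProp1 i hi
    · rw [hown.bundleFrom_eq_empty hi]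
      exact Or.inl (by simpa using hout i hi)
end

section
/- Let there be two agents w and ℓ with additive utilities u_w, u_ℓ : O → ℝ over a finite set O of objective items, i.e., O is partitioned into goods G = {o : u_w(o) > 0 and u_ℓ(o) > 0} and chores C = {o : u_w(o) < 0 and u_ℓ(o) < 0} with G ∪ C = O. Let π be a complete allocation of O to {w, ℓ}, and suppose there exists α ≥ 0 such that |u_ℓ(o)| ≥ α·|u_w(o)| for every item o ∈ (G ∩ π(ℓ)) ∪ (C ∩ π(w)), and |u_ℓ(o)| ≤ α·|u_w(o)| for every item o ∈ (G ∩ π(w)) ∪ (C ∩ π(ℓ)). Then π is Pareto-optimal: no complete allocation π' of O to {w, ℓ} satisfies u_i(π'(i)) ≥ u_i(π(i)) for both agents with strict inequality for at least one agent. -/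
/-!
Giving every item to the agent with the larger weighted value maximizes the weighted welfare
`β · u_w + u_ℓ`, and the threshold says exactly that `π` does this for `β = α`. For `β > 0` a
Pareto improvement would raise this welfare strictly. If `α ≤ 0`, the threshold forces `ℓ` to hold
exactly the goods, and then every small enough `β > 0` is a threshold as well.
-/

open Finset Filter Topology

theorem Finset.exists_pos_forall_mul_le {ι : Type*} (s : Finset ι) (f g : ι → ℝ)
    (hg : ∀ o ∈ s, 0 < g o) :
    ∃ ε > 0, ∀ o ∈ s, ε * f o ≤ g o := by
  have hsmall : ∀ᶠ ε in 𝓝[>] (0 : ℝ), ∀ o ∈ s, ε * f o ≤ g o := by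
    refine (eventually_all_finset s).2 fun o ho ↦ ?_
    have hlim : Tendsto (fun ε ↦ ε * f o) (𝓝[>] 0) (𝓝 (0 * f o)) :=
      (tendsto_id.mul_const (f o)).mono_left nhdsWithin_le_nhds
    exact (hlim.eventually_lt_const (by simpa using hg o ho)).mono fun _ h ↦ h.le
  exact (hsmall.and self_mem_nhdsWithin).exists.imp fun ε h ↦ ⟨h.2, h.1⟩

section Welfare

variable {ι : Type*} [DecidableEq ι] {A B A' B' : Finset ι} {f g : ι → ℝ}

theorem sum_add_sum_eq_sum_union_ite (hAB : Disjoint A B) :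
    ∑ o ∈ A, f o + ∑ o ∈ B, g o = ∑ o ∈ A ∪ B, if o ∈ A then f o else g o := by
  rw [sum_union hAB]
  congr 1
  · exact sum_congr rfl fun o ho ↦ (if_pos ho).symm
  · exact sum_congr rfl fun o ho ↦ (if_neg (disjoint_right.mp hAB ho)).symm

theorem sum_add_sum_le_of_forall_le (hA : ∀ o ∈ A, g o ≤ f o) (hB : ∀ o ∈ B, f o ≤ g o)
    (hAB : Disjoint A B) (hAB' : Disjoint A' B') (hcover : A' ∪ B' = A ∪ B) :
    ∑ o ∈ A', f o + ∑ o ∈ B', g o ≤ ∑ o ∈ A, f o + ∑ o ∈ B, g o := by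
  rw [sum_add_sum_eq_sum_union_ite hAB, sum_add_sum_eq_sum_union_ite hAB', hcover]
  refine sum_le_sum fun o ho ↦ ?_
  have hmax : (if o ∈ A then f o else g o) = max (f o) (g o) := by
    split_ifs with hoA
    · exact (max_eq_left (hA o hoA)).symm
    · exact (max_eq_right (hB o ((mem_union.mp ho).resolve_left hoA))).symm
  rw [hmax]
  split_ifs
  · exact le_max_left _ _
  · exact le_max_right _ _

end Welfare

section Threshold

variable {ι : Type*} [DecidableEq ι] {A B : Finset ι} {uw ul : ι → ℝ} {x y α : ℝ}

theorem le_mul_of_threshold (hobj : (0 < x ∧ 0 < y) ∨ (x < 0 ∧ y < 0))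
    (hgood : 0 < x → 0 < y → |y| ≤ α * |x|) (hchore : x < 0 → y < 0 → α * |x| ≤ |y|) :
    y ≤ α * x := by
  rcases hobj with ⟨hx, hy⟩ | ⟨hx, hy⟩
  · simpa only [abs_of_pos hx, abs_of_pos hy] using hgood hx hy
  · have h := hchore hx hy
    rw [abs_of_neg hx, abs_of_neg hy] at h
    linarith

theorem mul_le_of_threshold (hobj : (0 < x ∧ 0 < y) ∨ (x < 0 ∧ y < 0))
    (hgood : 0 < x → 0 < y → α * |x| ≤ |y|) (hchore : x < 0 → y < 0 → |y| ≤ α * |x|) :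
    α * x ≤ y := by
  rcases hobj with ⟨hx, hy⟩ | ⟨hx, hy⟩
  · simpa only [abs_of_pos hx, abs_of_pos hy] using hgood hx hy
  · have h := hchore hx hy
    rw [abs_of_neg hx, abs_of_neg hy] at h
    linarith

theorem exists_pos_threshold (hobj : ∀ o ∈ A ∪ B, (0 < uw o ∧ 0 < ul o) ∨ (uw o < 0 ∧ ul o < 0))
    (hA : ∀ o ∈ A, ul o ≤ α * uw o) (hB : ∀ o ∈ B, α * uw o ≤ ul o) :
    ∃ β > 0, (∀ o ∈ A, ul o ≤ β * uw o) ∧ ∀ o ∈ B, β * uw o ≤ ul o := by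
  rcases lt_or_ge 0 α with hα | hα
  · exact ⟨α, hα, hA, hB⟩
  -- with `α ≤ 0`, `A` holds only chores and `B` only goods, so only lower bounds on `β` remain
  obtain ⟨ε, hε, hsmall⟩ :=
    (A ∪ B).exists_pos_forall_mul_le (fun o ↦ |uw o|) (fun o ↦ |ul o|) fun o ho ↦ by
      rcases hobj o ho with ⟨-, hl⟩ | ⟨-, hl⟩
      exacts [abs_pos.2 hl.ne', abs_pos.2 hl.ne]
  refine ⟨ε, hε, fun o ho ↦ ?_, fun o ho ↦ ?_⟩
  · have hoAB := mem_union_left B ho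
    refine le_mul_of_threshold (hobj o hoAB) (fun hw _ ↦ ?_) fun _ _ ↦ hsmall o hoAB
    nlinarith [hA o ho]
  · have hoAB := mem_union_right A ho
    refine mul_le_of_threshold (hobj o hoAB) (fun _ _ ↦ hsmall o hoAB) fun hw _ ↦ ?_
    nlinarith [hB o ho]

end Threshold

theorem adjusted_winner_threshold_pareto_optimal_general
    (ι : Type*) [DecidableEq ι] (O : Finset ι)
    (uw ul : ι → ℝ)
    -- every item is an objective good or an objective chore
    (hobj : ∀ o ∈ O, (0 < uw o ∧ 0 < ul o) ∨ (uw o < 0 ∧ ul o < 0))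
    (A B : Finset ι)  -- A = π(w), B = π(ℓ)
    (hdisj : Disjoint A B) (hcomplete : A ∪ B = O)
    (α : ℝ)
    (hlow : ∀ o ∈ O, ((0 < uw o ∧ 0 < ul o ∧ o ∈ B) ∨ (uw o < 0 ∧ ul o < 0 ∧ o ∈ A)) →
      α * |uw o| ≤ |ul o|)
    (hhigh : ∀ o ∈ O, ((0 < uw o ∧ 0 < ul o ∧ o ∈ A) ∨ (uw o < 0 ∧ ul o < 0 ∧ o ∈ B)) →
      |ul o| ≤ α * |uw o|) :
    ¬ ∃ A' B' : Finset ι,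
      A' ⊆ O ∧ B' ⊆ O ∧ Disjoint A' B' ∧ A' ∪ B' = O ∧
      (∑ o ∈ A, uw o ≤ ∑ o ∈ A', uw o) ∧ (∑ o ∈ B, ul o ≤ ∑ o ∈ B', ul o) ∧
      ((∑ o ∈ A, uw o < ∑ o ∈ A', uw o) ∨ (∑ o ∈ B, ul o < ∑ o ∈ B', ul o)) := by
  subst hcomplete
  rintro ⟨A', B', -, -, hdisj', hcover, hw, hl, hstrict⟩
  have hA : ∀ o ∈ A, ul o ≤ α * uw o := fun o ho ↦
    have hoAB := mem_union_left B ho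
    le_mul_of_threshold (hobj o hoAB) (fun hw hl ↦ hhigh o hoAB (.inl ⟨hw, hl, ho⟩))
      fun hw hl ↦ hlow o hoAB (.inr ⟨hw, hl, ho⟩)
  have hB : ∀ o ∈ B, α * uw o ≤ ul o := fun o ho ↦
    have hoAB := mem_union_right A ho
    mul_le_of_threshold (hobj o hoAB) (fun hw hl ↦ hlow o hoAB (.inl ⟨hw, hl, ho⟩))
      fun hw hl ↦ hhigh o hoAB (.inr ⟨hw, hl, ho⟩)
  obtain ⟨β, hβ, hAβ, hBβ⟩ := exists_pos_threshold hobj hA hB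
  have hwelfare := sum_add_sum_le_of_forall_le (f := fun o ↦ β * uw o) hAβ hBβ hdisj hdisj' hcover
  simp only [← mul_sum] at hwelfare
  rcases hstrict with hw' | hl'
  · linarith [mul_lt_mul_of_pos_left hw' hβ]
  · linarith [mul_le_mul_of_nonneg_left hw hβ.le]

/-- The key invariant of the generalized Adjusted Winner rule.
Two agents `w` (winner, index 0) and `ℓ` (loser, index 1) with additive utilities over
objective items (each item is a good for both or a chore for both). If there is a
threshold `α ≥ 0` such that `|u_ℓ(o)| ≥ α·|u_w(o)|` for every good held by the loser and
every chore held by the winner, and `|u_ℓ(o)| ≤ α·|u_w(o)|` for every good held by the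
winner and every chore held by the loser, then the allocation is Pareto-optimal. -/
theorem adjusted_winner_threshold_pareto_optimal
    (ι : Type*) [DecidableEq ι] (O : Finset ι)
    (uw ul : ι → ℝ)
    -- every item is an objective good or an objective chore
    (hobj : ∀ o ∈ O, (0 < uw o ∧ 0 < ul o) ∨ (uw o < 0 ∧ ul o < 0))
    (A B : Finset ι)  -- A = π(w), B = π(ℓ)
    (hAsub : A ⊆ O) (hBsub : B ⊆ O)
    (hdisj : Disjoint A B) (hcomplete : A ∪ B = O)
    (α : ℝ) (hα : 0 ≤ α)
    (hlow : ∀ o ∈ O, ((0 < uw o ∧ 0 < ul o ∧ o ∈ B) ∨ (uw o < 0 ∧ ul o < 0 ∧ o ∈ A)) →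
      α * |uw o| ≤ |ul o|)
    (hhigh : ∀ o ∈ O, ((0 < uw o ∧ 0 < ul o ∧ o ∈ A) ∨ (uw o < 0 ∧ ul o < 0 ∧ o ∈ B)) →
      |ul o| ≤ α * |uw o|) :
    ¬ ∃ A' B' : Finset ι,
      A' ⊆ O ∧ B' ⊆ O ∧ Disjoint A' B' ∧ A' ∪ B' = O ∧
      (∑ o ∈ A, uw o ≤ ∑ o ∈ A', uw o) ∧ (∑ o ∈ B, ul o ≤ ∑ o ∈ B', ul o) ∧
      ((∑ o ∈ A, uw o < ∑ o ∈ A', uw o) ∨ (∑ o ∈ B, ul o < ∑ o ∈ B', ul o)) :=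
  adjusted_winner_threshold_pareto_optimal_general ι O uw ul hobj A B hdisj hcomplete α hlow hhigh
end
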